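/- arXiv:2112.10426 — 6 statements merged into one kernel-verified Lean document; each statement's English description precedes it below -/
import Mathlib

section
/- For all integers d, t, n with d ≥ 2, n ≥ 2 and 1 ≤ t ≤ min(d, n), the domination number of the directed t-constrained de Bruijn graph satisfies γ(cDB⁺(d,t,n)) ≥ ⌈ (d!/(d−t+2)!) · (d−t+1)^{n−t+1} ⌉. -/
/-- A sequence `x` of length `n` over the alphabet `Fin d` is `t`-constrained if
equal symbols occur at positions at distance at least `t`. -/
def dbConstrained (d t n : ℕ) (x : Fin n → Fin d) : Prop :=
  ∀ i j : Fin n, i < j → x i = x j → t ≤ (j : ℕ) - (i : ℕ)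

/-- The vertex set `V(d,t,n)` of the `t`-constrained de Bruijn graph: all
`t`-constrained sequences of length `n` over a `d`-letter alphabet. -/
abbrev dbVtx (d t n : ℕ) : Type := {x : Fin n → Fin d // dbConstrained d t n x}

/-- `dbShift x y` holds when there is a directed de Bruijn edge from `x` to `y`,
i.e. `y` is obtained from `x` by deleting its first symbol and appending a new
last symbol. -/
def dbShift {d t n : ℕ} (x y : dbVtx d t n) : Prop :=
  ∀ (i : Fin n) (h : (i : ℕ) + 1 < n), y.val i = x.val ⟨(i : ℕ) + 1, h⟩

/-- `S` is a dominating set of the directed `t`-constrained de Bruijn graph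
`cDB⁺(d,t,n)`: every vertex is dominated by (equal to, or an out-neighbor of)
some element of `S`. -/
def dbDirDominating {d t n : ℕ} (S : Set (dbVtx d t n)) : Prop :=
  ∀ v : dbVtx d t n, ∃ s ∈ S, s = v ∨ dbShift s v

/-- The domination number `γ(cDB⁺(d,t,n))` of the directed `t`-constrained
de Bruijn graph. -/
noncomputable def gammaDir (d t n : ℕ) : ℕ :=
  sInf {k | ∃ S : Set (dbVtx d t n), S.Finite ∧ S.ncard = k ∧ dbDirDominating S}

/-- Adjacency in the undirected `t`-constrained de Bruijn graph `cDB(d,t,n)`: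
edge directions are ignored and loops are removed. -/
def dbAdj {d t n : ℕ} (x y : dbVtx d t n) : Prop :=
  x ≠ y ∧ (dbShift x y ∨ dbShift y x)

/-- `S` is a dominating set of the undirected graph `cDB(d,t,n)`: every vertex
is dominated by (equal to, or adjacent to) some element of `S`. -/
def dbUndirDominating {d t n : ℕ} (S : Set (dbVtx d t n)) : Prop :=
  ∀ v : dbVtx d t n, ∃ s ∈ S, s = v ∨ dbAdj s v

/-- The domination number `γ(cDB(d,t,n))` of the undirected `t`-constrained
de Bruijn graph. -/
noncomputable def gammaUndir (d t n : ℕ) : ℕ :=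
  sInf {k | ∃ S : Set (dbVtx d t n), S.Finite ∧ S.ncard = k ∧ dbUndirDominating S}


instance dbConstrainedDec (d t n : ℕ) : DecidablePred (dbConstrained d t n) := fun x => by
  unfold dbConstrained; infer_instance

/-- The finset of `t`-constrained sequences. -/
def dbVset (d t n : ℕ) : Finset (Fin n → Fin d) :=
  Finset.univ.filter (dbConstrained d t n)

/-- Extension of a sequence of length `n` by one extra symbol `a`. -/
def dbExt {d : ℕ} (n : ℕ) (v : Fin n → Fin d) (a : Fin d) : Fin (n + 1) → Fin d :=
  fun i => if h : (i : ℕ) < n then v ⟨i, h⟩ else a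

lemma dbVset_card_base (d t : ℕ) : (dbVset d t t).card = d.descFactorial t := by
  classical
  have hiff : ∀ x : Fin t → Fin d, dbConstrained d t t x ↔ Function.Injective x := by
    intro x
    constructor
    · intro hc i j hij
      by_contra hne
      rcases lt_or_gt_of_ne (fun h : i = j => hne h) with h | h
      · have h1 := hc i j h hij
        have h2 := j.isLt
        have h3 : (i : ℕ) < (j : ℕ) := h
        omega
      · have h1 := hc j i h hij.symm
        have h2 := i.isLt
        have h3 : (j : ℕ) < (i : ℕ) := h
        omega
    · intro hinj i j hij heq
      exact absurd (hinj heq) (Fin.ne_of_lt hij)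
  calc (dbVset d t t).card
      = Fintype.card {x : Fin t → Fin d // dbConstrained d t t x} :=
        (Fintype.card_subtype _).symm
    _ = Fintype.card {x : Fin t → Fin d // Function.Injective x} :=
        Fintype.card_congr (Equiv.subtypeEquivRight hiff)
    _ = Fintype.card (Fin t ↪ Fin d) :=
        Fintype.card_congr (Equiv.subtypeInjectiveEquivEmbedding _ _)
    _ = d.descFactorial t := by
        rw [Fintype.card_embedding_eq]; simp

lemma dbVset_card_step (d t n : ℕ) (ht1 : 1 ≤ t) (htd : t ≤ d) (htn : t ≤ n) :
    (d - t + 1) * (dbVset d t n).card ≤ (dbVset d t (n + 1)).card := by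
  classical
  have hn1 : 1 ≤ n := le_trans ht1 htn
  have hmap : ∀ x ∈ dbVset d t (n + 1), Fin.init x ∈ dbVset d t n := by
    intro x hx
    simp only [dbVset, Finset.mem_filter, Finset.mem_univ, true_and] at hx ⊢
    intro i j hij heq
    have h := hx i.castSucc j.castSucc (Fin.castSucc_lt_castSucc_iff.mpr hij) heq
    simpa only [Fin.coe_castSucc] using h
  have fiber : ∀ v ∈ dbVset d t n,
      d - t + 1 ≤ ((dbVset d t (n + 1)).filter (fun x => Fin.init x = v)).card := by
    intro v hvV
    have hv : dbConstrained d t n v := by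
      simpa [dbVset] using hvV
    set B : Finset (Fin d) :=
      Finset.image (fun k : Fin (t - 1) => v ⟨n - 1 - (k : ℕ), by omega⟩) Finset.univ with hB
    have hextlast : ∀ a : Fin d, dbExt n v a ⟨n, by omega⟩ = a := by
      intro a; simp [dbExt]
    have hextinj : Function.Injective (dbExt n v) := by
      intro a b h
      rw [← hextlast a, ← hextlast b, h]
    have hinit : ∀ a, Fin.init (dbExt n v a) = v := by
      intro a; funext i
      show dbExt n v a i.castSucc = v i
      have hi : ((i.castSucc : Fin (n + 1)) : ℕ) < n := i.isLt
      rw [dbExt, dif_pos hi]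
      exact congrArg v (Fin.ext (by simp))
    have hmem : ∀ a ∉ B, dbExt n v a ∈ dbVset d t (n + 1) := by
      intro a ha
      simp only [dbVset, Finset.mem_filter, Finset.mem_univ, true_and]
      intro i j hij heq
      have hjn1 : (j : ℕ) < n + 1 := j.isLt
      have hijv : (i : ℕ) < (j : ℕ) := hij
      by_cases hj : (j : ℕ) < n
      · have hi : (i : ℕ) < n := lt_trans hijv hj
        have heq' : v ⟨i, hi⟩ = v ⟨j, hj⟩ := by
          simpa only [dbExt, dif_pos hi, dif_pos hj] using heq
        exact hv ⟨i, hi⟩ ⟨j, hj⟩ (Fin.mk_lt_mk.mpr hijv) heq'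
      · have hj' : (j : ℕ) = n := by clear * - hjn1 hj; omega
        have hi : (i : ℕ) < n := by clear * - hijv hj'; omega
        have hva : v ⟨i, hi⟩ = a := by
          have hj2 : ¬ ((j : ℕ) < n) := hj
          simpa only [dbExt, dif_pos hi, dif_neg hj2] using heq
        by_contra hc
        push_neg at hc
        have hk : n - 1 - (i : ℕ) < t - 1 := by clear * - hc hj' hi ht1 htn hijv; omega
        apply ha
        refine Finset.mem_image.mpr ⟨⟨n - 1 - (i : ℕ), hk⟩, Finset.mem_univ _, ?_⟩
        rw [← hva]
        refine congrArg v (Fin.ext ?_)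
        show n - 1 - (n - 1 - (i : ℕ)) = (i : ℕ)
        clear * - hi; omega
    have himg : Finset.image (dbExt n v) (Finset.univ \ B) ⊆
        (dbVset d t (n + 1)).filter (fun x => Fin.init x = v) := by
      intro x hx
      rcases Finset.mem_image.mp hx with ⟨a, ha, rfl⟩
      have ha' := (Finset.mem_sdiff.mp ha).2
      exact Finset.mem_filter.mpr ⟨hmem a ha', hinit a⟩
    have hBcard : B.card ≤ t - 1 := le_trans Finset.card_image_le (by simp)
    calc d - t + 1 ≤ (Finset.univ \ B).card := by
          rw [Finset.card_sdiff_of_subset (Finset.subset_univ B)]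
          simp only [Finset.card_univ, Fintype.card_fin]
          clear * - hBcard htd ht1 htn hn1; omega
      _ = (Finset.image (dbExt n v) (Finset.univ \ B)).card :=
          (Finset.card_image_of_injective _ hextinj).symm
      _ ≤ _ := Finset.card_le_card himg
  rw [Finset.card_eq_sum_card_fiberwise hmap]
  calc (d - t + 1) * (dbVset d t n).card
      = ∑ _v ∈ dbVset d t n, (d - t + 1) := by
        rw [Finset.sum_const, smul_eq_mul, mul_comm]
    _ ≤ ∑ v ∈ dbVset d t n, ((dbVset d t (n + 1)).filter (fun x => Fin.init x = v)).card :=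
        Finset.sum_le_sum fiber

lemma dbVset_card_ge (d t : ℕ) (ht1 : 1 ≤ t) (htd : t ≤ d) :
    ∀ m : ℕ, d.descFactorial t * (d - t + 1) ^ m ≤ (dbVset d t (t + m)).card
  | 0 => by simp [dbVset_card_base]
  | (m + 1) => by
      have ih := dbVset_card_ge d t ht1 htd m
      have step := dbVset_card_step d t (t + m) ht1 htd (Nat.le_add_right _ _)
      calc d.descFactorial t * (d - t + 1) ^ (m + 1)
          = (d - t + 1) * (d.descFactorial t * (d - t + 1) ^ m) := by ring
        _ ≤ (d - t + 1) * (dbVset d t (t + m)).card := Nat.mul_le_mul_left _ ih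
        _ ≤ (dbVset d t (t + m + 1)).card := step

lemma dbShift_card (d t n : ℕ) (hn : 2 ≤ n) (ht1 : 1 ≤ t) (htd : t ≤ d) (htn : t ≤ n)
    (s : dbVtx d t n) (F : Finset (dbVtx d t n)) (hF : ∀ y ∈ F, dbShift s y) :
    F.card ≤ d - t + 1 := by
  classical
  have hA : n - 1 < n := by omega
  have hB2 : ∀ k : ℕ, k < t - 1 → (n - 2 - k) + 1 < n := by intro k hk; omega
  have hB3 : ∀ k : ℕ, k < t - 1 → n - 2 - k < n := by intro k hk; omega
  have hB4 : ∀ k : ℕ, n - 1 - k < n := by intro k; omega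
  have hinjL : Set.InjOn (fun y : dbVtx d t n => y.val ⟨n - 1, hA⟩) F := by
    intro y hy y' hy' hEq
    have hy1 : dbShift s y := hF y (Finset.mem_coe.mp hy)
    have hy2 : dbShift s y' := hF y' (Finset.mem_coe.mp hy')
    apply Subtype.ext; funext i
    by_cases hi : (i : ℕ) + 1 < n
    · rw [hy1 i hi, hy2 i hi]
    · have hI := i.isLt
      have hival : (i : ℕ) = n - 1 := by clear * - hI hi; omega
      have h1 : i = (⟨n - 1, hA⟩ : Fin n) := Fin.ext hival
      rw [h1]; exact hEq
  have himgT : Finset.image (fun y : dbVtx d t n => y.val ⟨n - 1, hA⟩) F ⊆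
      Finset.univ \ Finset.image
        (fun j : Fin (t - 1) => s.val ⟨n - 1 - (j : ℕ), hB4 (j : ℕ)⟩) Finset.univ := by
    intro b hb
    rcases Finset.mem_image.mp hb with ⟨y, hyF, hby⟩
    have hy1 : dbShift s y := hF y hyF
    refine Finset.mem_sdiff.mpr ⟨Finset.mem_univ _, ?_⟩
    intro hbT
    rcases Finset.mem_image.mp hbT with ⟨j, _, hj⟩
    have hj2 : (j : ℕ) < t - 1 := j.isLt
    have hlt : (n - 2 - (j : ℕ)) + 1 < n := hB2 (j : ℕ) hj2
    have hlt2 : n - 2 - (j : ℕ) < n := hB3 (j : ℕ) hj2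
    have e1 : y.val ⟨n - 2 - (j : ℕ), hlt2⟩ = s.val ⟨n - 2 - (j : ℕ) + 1, hlt⟩ :=
      hy1 ⟨n - 2 - (j : ℕ), hlt2⟩ hlt
    have e2 : (⟨n - 2 - (j : ℕ) + 1, hlt⟩ : Fin n) = ⟨n - 1 - (j : ℕ), hB4 (j : ℕ)⟩ :=
      Fin.mk_eq_mk.mpr (by clear * - hj2 htn hn; omega)
    have e3 : y.val ⟨n - 2 - (j : ℕ), hlt2⟩ = y.val ⟨n - 1, hA⟩ := by
      rw [e1, e2, hj, ← hby]
    have h4 := y.property ⟨n - 2 - (j : ℕ), hlt2⟩ ⟨n - 1, hA⟩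
      (Fin.mk_lt_mk.mpr (by clear * - hj2 htn hn; omega)) e3
    have h5 : t ≤ (n - 1) - (n - 2 - (j : ℕ)) := h4
    clear * - h5 hj2 htn hn ht1; omega
  have hTinj : Function.Injective
      (fun j : Fin (t - 1) => s.val ⟨n - 1 - (j : ℕ), hB4 (j : ℕ)⟩) := by
    have haux : ∀ j j' : Fin (t - 1), (j : ℕ) < (j' : ℕ) →
        s.val ⟨n - 1 - (j : ℕ), hB4 (j : ℕ)⟩ ≠ s.val ⟨n - 1 - (j' : ℕ), hB4 (j' : ℕ)⟩ := by
      intro j j' hlt heq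
      have h2 : (j' : ℕ) < t - 1 := j'.isLt
      have h4 := s.property ⟨n - 1 - (j' : ℕ), hB4 (j' : ℕ)⟩ ⟨n - 1 - (j : ℕ), hB4 (j : ℕ)⟩
        (Fin.mk_lt_mk.mpr (by clear * - hlt h2 htn hn; omega)) heq.symm
      have h5 : t ≤ (n - 1 - (j : ℕ)) - (n - 1 - (j' : ℕ)) := h4
      clear * - h5 hlt h2 htn hn ht1; omega
    intro j j' heq
    by_contra hne
    rcases lt_or_gt_of_ne (fun h : j = j' => hne h) with h | h
    · exact haux j j' h heq
    · exact haux j' j h heq.symm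
  have hTcard : (Finset.image (fun j : Fin (t - 1) => s.val ⟨n - 1 - (j : ℕ), hB4 (j : ℕ)⟩)
      Finset.univ).card = t - 1 := by
    rw [Finset.card_image_of_injective _ hTinj, Finset.card_univ, Fintype.card_fin]
  have hc1 := Finset.card_image_of_injOn hinjL
  have hc2 := Finset.card_le_card himgT
  have hc3 : (Finset.univ \ Finset.image
      (fun j : Fin (t - 1) => s.val ⟨n - 1 - (j : ℕ), hB4 (j : ℕ)⟩) Finset.univ).card
      = d - (t - 1) := by
    rw [Finset.card_sdiff_of_subset (Finset.subset_univ _), hTcard]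
    simp
  clear * - hc1 hc2 hc3 htd ht1; omega

lemma dbDom_card (d t n : ℕ) (hn : 2 ≤ n) (ht1 : 1 ≤ t) (htd : t ≤ d) (htn : t ≤ n)
    (S : Set (dbVtx d t n)) (hf : S.Finite) (hdom : dbDirDominating S) :
    (dbVset d t n).card ≤ (d - t + 2) * S.ncard := by
  classical
  have key : ∀ s : dbVtx d t n,
      (Finset.univ.filter (fun v : dbVtx d t n => s = v ∨ dbShift s v)).card ≤ d - t + 2 := by
    intro s
    have hsub : Finset.univ.filter (fun v : dbVtx d t n => s = v ∨ dbShift s v)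
        ⊆ insert s (Finset.univ.filter (fun v : dbVtx d t n => dbShift s v)) := by
      intro v hv
      rcases (Finset.mem_filter.mp hv).2 with h | h
      · exact Finset.mem_insert.mpr (Or.inl h.symm)
      · exact Finset.mem_insert.mpr (Or.inr (Finset.mem_filter.mpr ⟨Finset.mem_univ _, h⟩))
    have hshift := dbShift_card d t n hn ht1 htd htn s
      (Finset.univ.filter (fun v : dbVtx d t n => dbShift s v))
      (fun y hy => (Finset.mem_filter.mp hy).2)
    calc (Finset.univ.filter (fun v : dbVtx d t n => s = v ∨ dbShift s v)).card
        ≤ (insert s (Finset.univ.filter (fun v : dbVtx d t n => dbShift s v))).card :=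
          Finset.card_le_card hsub
      _ ≤ (Finset.univ.filter (fun v : dbVtx d t n => dbShift s v)).card + 1 :=
          Finset.card_insert_le _ _
      _ ≤ d - t + 2 := by omega
  have hcover : (Finset.univ : Finset (dbVtx d t n)) ⊆
      hf.toFinset.biUnion
        (fun s => Finset.univ.filter (fun v : dbVtx d t n => s = v ∨ dbShift s v)) := by
    intro v _
    rcases hdom v with ⟨s, hsS, hsv⟩
    exact Finset.mem_biUnion.mpr
      ⟨s, hf.mem_toFinset.mpr hsS, Finset.mem_filter.mpr ⟨Finset.mem_univ _, hsv⟩⟩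
  calc (dbVset d t n).card
      = Fintype.card (dbVtx d t n) := (Fintype.card_subtype _).symm
    _ = (Finset.univ : Finset (dbVtx d t n)).card := Finset.card_univ.symm
    _ ≤ (hf.toFinset.biUnion
          (fun s => Finset.univ.filter (fun v : dbVtx d t n => s = v ∨ dbShift s v))).card :=
        Finset.card_le_card hcover
    _ ≤ ∑ s ∈ hf.toFinset,
          (Finset.univ.filter (fun v : dbVtx d t n => s = v ∨ dbShift s v)).card :=
        Finset.card_biUnion_le
    _ ≤ ∑ _s ∈ hf.toFinset, (d - t + 2) := Finset.sum_le_sum (fun s _ => key s)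
    _ = hf.toFinset.card * (d - t + 2) := by rw [Finset.sum_const, smul_eq_mul]
    _ = (d - t + 2) * S.ncard := by rw [Set.ncard_eq_toFinset_card _ hf, mul_comm]

/-- `γ(cDB⁺(d,t,n)) ≥ ⌈(d!/(d-t+2)!) * (d-t+1)^(n-t+1)⌉`. -/

theorem gammaDir_lower (d t n : ℕ) (hd : 2 ≤ d) (hn : 2 ≤ n)
    (ht1 : 1 ≤ t) (htd : t ≤ d) (htn : t ≤ n) :
    ⌈(d.factorial : ℚ) / ((d - t + 2).factorial : ℚ) *
      (((d - t + 1) ^ (n - t + 1) : ℕ) : ℚ)⌉₊ ≤ gammaDir d t n := by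
  classical
  have hmem : gammaDir d t n ∈
      {k | ∃ S : Set (dbVtx d t n), S.Finite ∧ S.ncard = k ∧ dbDirDominating S} :=
    Nat.sInf_mem ⟨(Set.univ : Set (dbVtx d t n)).ncard, Set.univ, Set.finite_univ, rfl,
      fun v => ⟨v, Set.mem_univ _, Or.inl rfl⟩⟩
  obtain ⟨S, hfin, hcard, hdom⟩ := hmem
  have key : (dbVset d t n).card ≤ (d - t + 2) * gammaDir d t n := by
    rw [← hcard]
    exact dbDom_card d t n hn ht1 htd htn S hfin hdom
  have cnt : d.descFactorial t * (d - t + 1) ^ (n - t) ≤ (dbVset d t n).card := by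
    have h := dbVset_card_ge d t ht1 htd (n - t)
    rwa [Nat.add_sub_cancel' htn] at h
  have h1 : d.descFactorial t * (d - t + 1) ^ (n - t) ≤ (d - t + 2) * gammaDir d t n :=
    le_trans cnt key
  have natineq : d.factorial * (d - t + 1) ^ (n - t + 1) ≤
      gammaDir d t n * (d - t + 2).factorial := by
    have hfac : (d - t + 2).factorial = (d - t + 2) * ((d - t + 1) * (d - t).factorial) := by
      rw [show d - t + 2 = (d - t + 1) + 1 from rfl, Nat.factorial_succ, Nat.factorial_succ]
    rw [← Nat.factorial_mul_descFactorial htd, hfac]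
    calc (d - t).factorial * d.descFactorial t * (d - t + 1) ^ (n - t + 1)
        = (d.descFactorial t * (d - t + 1) ^ (n - t)) * ((d - t + 1) * (d - t).factorial) := by
          rw [pow_succ]; ring
      _ ≤ ((d - t + 2) * gammaDir d t n) * ((d - t + 1) * (d - t).factorial) :=
          Nat.mul_le_mul_right _ h1
      _ = gammaDir d t n * ((d - t + 2) * ((d - t + 1) * (d - t).factorial)) := by ring
  rw [Nat.ceil_le, div_mul_eq_mul_div, div_le_iff₀ (by positivity)]
  calc (d.factorial : ℚ) * (((d - t + 1) ^ (n - t + 1) : ℕ) : ℚ)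
      = ((d.factorial * (d - t + 1) ^ (n - t + 1) : ℕ) : ℚ) := by push_cast; ring
    _ ≤ ((gammaDir d t n * (d - t + 2).factorial : ℕ) : ℚ) := by exact_mod_cast natineq
    _ = (gammaDir d t n : ℚ) * ((d - t + 2).factorial : ℚ) := by push_cast; ring
end

section
/- For all integers d, t, n with d ≥ 2, n ≥ 2 and 1 ≤ t ≤ min(d, n), the domination number of the undirected t-constrained de Bruijn graph satisfies γ(cDB(d,t,n)) ≥ ⌈ d! · (d−t+1)^{n−t} / ((d−t)! · (2d−2t+3)) ⌉. -/
/-!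
Appending a symbol to a `t`-constrained word only has to avoid its last `t - 1` symbols, which are
pairwise distinct; hence every word of length `≥ t` has exactly `d - t + 1` one-letter extensions
and `|V(d,t,n)| = d! (d-t+1)^(n-t) / (d-t)!`. For the same reason a vertex has at most `d - t + 1`
out-neighbours and, reversing words, at most `d - t + 1` in-neighbours. So a closed neighbourhood
has at most `2d - 2t + 3` vertices, and a dominating set needs at least `|V| / (2d - 2t + 3)`.
-/

open Finset

instance (d t n : ℕ) : DecidablePred (dbConstrained d t n) := fun _ => by
  unfold dbConstrained; infer_instance

lemma card_le_card_mul_of_forall_exists_mem {α β : Type*} [Fintype α] [DecidableEq α]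
    (N : β → Finset α) (S : Finset β) (hS : ∀ a, ∃ s ∈ S, a ∈ N s) (m : ℕ)
    (hN : ∀ s ∈ S, #(N s) ≤ m) : Fintype.card α ≤ #S * m :=
  calc Fintype.card α = #(univ : Finset α) := (card_univ).symm
    _ ≤ #(S.biUnion N) := card_le_card fun a _ => mem_biUnion.2 (hS a)
    _ ≤ #S * m := card_biUnion_le_card_mul S N m hN

section

variable {d t n : ℕ}

lemma dbConstrained_iff_injective (hn : n ≤ t) (x : Fin n → Fin d) :
    dbConstrained d t n x ↔ Function.Injective x := by
  refine ⟨fun hx i j hij => ?_, fun hx i j hij hij' => absurd (hx hij') hij.ne⟩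
  by_contra hne
  rcases lt_or_gt_of_ne hne with h | h
  · have := hx i j h hij; omega
  · have := hx j i h hij.symm; omega

lemma dbConstrained.apply_ne {x : Fin n → Fin d} (hx : dbConstrained d t n x) {i j : Fin n}
    (hij : i < j) (hji : (j : ℕ) < i + t) : x i ≠ x j := fun h => by
  have := hx i j hij h; omega

lemma dbConstrained.tail {x : Fin (n + 1) → Fin d} (hx : dbConstrained d t (n + 1) x) :
    dbConstrained d t n (Fin.tail x) := fun i j hij h => by
  simpa using hx i.succ j.succ (Fin.succ_lt_succ_iff.2 hij) h

/-- The last `t - 1` symbols of `x`. -/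
def dbTailSymbols (t : ℕ) (x : Fin n → Fin d) : Finset (Fin d) :=
  (univ.filter fun i : Fin n => n < (i : ℕ) + t).image x

lemma card_filter_lt_add (ht : t ≤ n + 1) :
    #(univ.filter fun i : Fin n => n < (i : ℕ) + t) = t - 1 := by
  have hval : (univ.filter fun i : Fin n => n < (i : ℕ) + t).map Fin.valEmbedding =
      Ico (n + 1 - t) n := by
    ext k
    simp only [mem_map, mem_filter, mem_univ, true_and, Fin.valEmbedding_apply, mem_Ico]
    constructor
    · rintro ⟨i, hi, rfl⟩
      omega
    · exact fun hk => ⟨⟨k, hk.2⟩, by simp only; omega, rfl⟩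
  rw [← card_map, hval, Nat.card_Ico]
  omega

lemma dbConstrained.card_dbTailSymbols {x : Fin n → Fin d} (hx : dbConstrained d t n x)
    (ht : t ≤ n + 1) : #(dbTailSymbols t x) = t - 1 := by
  rw [dbTailSymbols, card_image_of_injOn, card_filter_lt_add ht]
  intro i hi j hj hij
  simp only [coe_filter, mem_univ, true_and, Set.mem_ofPred_eq] at hi hj
  by_contra hne
  rcases lt_or_gt_of_ne hne with h | h
  · exact hx.apply_ne h (by omega) hij
  · exact hx.apply_ne h (by omega) hij.symm

lemma dbConstrained_snoc_iff {x : Fin n → Fin d} {a : Fin d} :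
    dbConstrained d t (n + 1) (Fin.snoc x a) ↔
      dbConstrained d t n x ∧ a ∉ dbTailSymbols t x := by
  constructor
  · intro h
    refine ⟨fun i j hij hx => ?_, ?_⟩
    · simpa using h i.castSucc j.castSucc (Fin.castSucc_lt_castSucc_iff.2 hij) (by simpa using hx)
    · simp only [dbTailSymbols, mem_image, mem_filter, mem_univ, true_and, not_exists, not_and]
      intro i hi hia
      have := h i.castSucc (Fin.last n) (Fin.castSucc_lt_last i) (by simpa using hia)
      simp only [Fin.val_castSucc, Fin.val_last] at this
      omega
  · rintro ⟨hx, ha⟩ i j hij hij'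
    induction j using Fin.lastCases with
    | last =>
      obtain ⟨i, rfl⟩ := Fin.exists_castSucc_eq.2 hij.ne
      rw [Fin.snoc_castSucc, Fin.snoc_last] at hij'
      by_contra hlt
      refine ha (mem_image.2 ⟨i, mem_filter.2 ⟨mem_univ _, ?_⟩, hij'⟩)
      simp only [Fin.val_castSucc, Fin.val_last] at hlt
      omega
    | cast j =>
      obtain ⟨i, rfl⟩ := Fin.exists_castSucc_eq.2 (hij.trans (Fin.castSucc_lt_last j)).ne
      rw [Fin.snoc_castSucc, Fin.snoc_castSucc] at hij'
      simpa using hx i j (Fin.castSucc_lt_castSucc_iff.1 hij) hij'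

lemma dbConstrained.init {y : Fin (n + 1) → Fin d} (hy : dbConstrained d t (n + 1) y) :
    dbConstrained d t n (Fin.init y) :=
  (dbConstrained_snoc_iff.1 (by rwa [Fin.snoc_init_self])).1

lemma dbConstrained.last_notMem_init {y : Fin (n + 1) → Fin d}
    (hy : dbConstrained d t (n + 1) y) : y (Fin.last n) ∉ dbTailSymbols t (Fin.init y) :=
  (dbConstrained_snoc_iff.1 (by rwa [Fin.snoc_init_self])).2

def dbSnocEquiv (d t n : ℕ) :
    (Σ x : dbVtx d t n, ↥(dbTailSymbols t x.1)ᶜ) ≃ dbVtx d t (n + 1) where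
  toFun p := ⟨Fin.snoc p.1.1 p.2.1, dbConstrained_snoc_iff.2 ⟨p.1.2, mem_compl.1 p.2.2⟩⟩
  invFun y :=
    ⟨⟨Fin.init y.1, y.2.init⟩, ⟨y.1 (Fin.last n), mem_compl.2 y.2.last_notMem_init⟩⟩
  left_inv _ := Sigma.subtype_ext (Subtype.ext (Fin.init_snoc (α := fun _ => Fin d) _ _))
    (Fin.snoc_last (α := fun _ => Fin d) _ _)
  right_inv y := Subtype.ext (Fin.snoc_init_self y.1)

lemma card_dbVtx_succ (ht : t ≤ n + 1) :
    Fintype.card (dbVtx d t (n + 1)) = Fintype.card (dbVtx d t n) * (d - (t - 1)) := by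
  have hfiber (x : dbVtx d t n) : Fintype.card ↥(dbTailSymbols t x.1)ᶜ = d - (t - 1) := by
    rw [Fintype.card_coe, card_compl, Fintype.card_fin, x.2.card_dbTailSymbols ht]
  rw [← Fintype.card_congr (dbSnocEquiv d t n), Fintype.card_sigma]
  simp only [hfiber, sum_const, card_univ, smul_eq_mul]

lemma card_dbVtx_self : Fintype.card (dbVtx d t t) = d.descFactorial t := by
  rw [Fintype.card_congr (Equiv.subtypeEquivRight (dbConstrained_iff_injective le_rfl)),
    Fintype.card_congr (Equiv.subtypeInjectiveEquivEmbedding (Fin t) (Fin d)),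
    Fintype.card_embedding_eq, Fintype.card_fin, Fintype.card_fin]

lemma card_dbVtx_mul_factorial (ht1 : 1 ≤ t) (htd : t ≤ d) (htn : t ≤ n) :
    Fintype.card (dbVtx d t n) * (d - t).factorial = d.factorial * (d - t + 1) ^ (n - t) := by
  induction n, htn using Nat.le_induction with
  | base => rw [card_dbVtx_self, mul_comm, Nat.factorial_mul_descFactorial htd, Nat.sub_self,
      pow_zero, mul_one]
  | succ n htn ih =>
    rw [card_dbVtx_succ (by omega), mul_right_comm, ih, Nat.succ_sub htn, pow_succ, mul_assoc]
    congr 2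
    omega

instance (x y : dbVtx d t n) : Decidable (dbShift x y) := by
  unfold dbShift; infer_instance

instance (x y : dbVtx d t n) : Decidable (dbAdj x y) := by
  unfold dbAdj; infer_instance

def dbOutNbhd (s : dbVtx d t n) : Finset (dbVtx d t n) := univ.filter (dbShift s)

def dbInNbhd (s : dbVtx d t n) : Finset (dbVtx d t n) := univ.filter (dbShift · s)

def dbClosedNbhd (s : dbVtx d t n) : Finset (dbVtx d t n) :=
  univ.filter fun v => s = v ∨ dbAdj s v

lemma dbShift.init_eq_tail {s v : dbVtx d t (n + 1)} (h : dbShift s v) :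
    Fin.init v.1 = Fin.tail s.1 :=
  funext fun i => h i.castSucc (by simp)

lemma card_dbOutNbhd_le (ht : t ≤ n + 1) (s : dbVtx d t (n + 1)) :
    #(dbOutNbhd s) ≤ d - (t - 1) := by
  have hsnoc {v} (hv : v ∈ dbOutNbhd s) : Fin.snoc (Fin.tail s.1) (v.1 (Fin.last n)) = v.1 := by
    rw [← (mem_filter.1 hv).2.init_eq_tail, Fin.snoc_init_self]
  calc #(dbOutNbhd s) ≤ #(dbTailSymbols t (Fin.tail s.1))ᶜ := by
        refine card_le_card_of_injOn (fun v => v.1 (Fin.last n)) (fun v hv => ?_) ?_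
        · rw [mem_coe, mem_compl, ← (mem_filter.1 hv).2.init_eq_tail]
          exact v.2.last_notMem_init
        · intro v hv w hw hvw
          exact Subtype.ext ((hsnoc hv).symm.trans ((congrArg _ hvw).trans (hsnoc hw)))
    _ = d - (t - 1) := by rw [card_compl, Fintype.card_fin, s.2.tail.card_dbTailSymbols ht]

def dbRev (x : dbVtx d t n) : dbVtx d t n :=
  ⟨x.1 ∘ Fin.rev, fun i j hij h => by
    have := x.2 j.rev i.rev (Fin.rev_lt_rev.2 hij) h.symm
    simp only [Fin.val_rev] at this
    omega⟩

lemma dbRev_injective : Function.Injective (dbRev (d := d) (t := t) (n := n)) := fun x y h =>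
  Subtype.ext (funext fun i => by simpa [dbRev] using congrFun (congrArg Subtype.val h) i.rev)

lemma dbShift.dbRev {x y : dbVtx d t n} (h : dbShift x y) : dbShift (dbRev y) (dbRev x) := by
  intro i hi
  have := h (Fin.rev ⟨i + 1, hi⟩) (by simp only [Fin.val_rev]; omega)
  change x.1 i.rev = y.1 (Fin.rev ⟨i + 1, hi⟩)
  rw [this]
  exact congrArg x.1 (Fin.ext (by simp only [Fin.val_rev]; omega))

lemma card_dbInNbhd_le (ht : t ≤ n + 1) (s : dbVtx d t (n + 1)) :
    #(dbInNbhd s) ≤ d - (t - 1) :=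
  calc #(dbInNbhd s) ≤ #(dbOutNbhd (dbRev s)) :=
        card_le_card_of_injOn dbRev
          (fun _ hv => mem_filter.2 ⟨mem_univ _, (mem_filter.1 hv).2.dbRev⟩)
          dbRev_injective.injOn
    _ ≤ d - (t - 1) := card_dbOutNbhd_le ht _

lemma card_dbClosedNbhd_le (ht : t ≤ n + 1) (s : dbVtx d t (n + 1)) :
    #(dbClosedNbhd s) ≤ 2 * (d - (t - 1)) + 1 :=
  calc #(dbClosedNbhd s) ≤ #(insert s (dbOutNbhd s ∪ dbInNbhd s)) := by
        refine card_le_card fun v hv => ?_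
        simp only [dbClosedNbhd, dbOutNbhd, dbInNbhd, mem_filter, mem_insert, mem_union, mem_univ,
          true_and] at hv ⊢
        rcases hv with rfl | ⟨-, h | h⟩ <;> tauto
    _ ≤ #(dbOutNbhd s) + #(dbInNbhd s) + 1 := (card_insert_le _ _).trans
        (Nat.add_le_add_right (card_union_le _ _) _)
    _ ≤ 2 * (d - (t - 1)) + 1 := by
        have := card_dbOutNbhd_le ht s
        have := card_dbInNbhd_le ht s
        omega

end

lemma card_dbVtx_le_gammaUndir_mul {d t n : ℕ} (hn : 0 < n) (htn : t ≤ n) :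
    Fintype.card (dbVtx d t n) ≤ gammaUndir d t n * (2 * (d - (t - 1)) + 1) := by
  obtain ⟨S, hS, hScard, hSdom⟩ : gammaUndir d t n ∈
      {k | ∃ S : Set (dbVtx d t n), S.Finite ∧ S.ncard = k ∧ dbUndirDominating S} :=
    Nat.sInf_mem ⟨_, Set.univ, Set.finite_univ, rfl, fun v => ⟨v, trivial, Or.inl rfl⟩⟩
  obtain ⟨m, rfl⟩ : ∃ m, n = m + 1 := ⟨n - 1, by omega⟩
  rw [← hScard, Set.ncard_eq_toFinset_card S hS]
  refine card_le_card_mul_of_forall_exists_mem dbClosedNbhd hS.toFinset (fun v => ?_) _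
    (fun s _ => card_dbClosedNbhd_le htn s)
  obtain ⟨s, hs, h⟩ := hSdom v
  exact ⟨s, hS.mem_toFinset.2 hs, mem_filter.2 ⟨mem_univ _, h⟩⟩

theorem gammaUndir_lower_general (d t n : ℕ) (ht1 : 1 ≤ t) (htd : t ≤ d) (htn : t ≤ n) :
    ⌈((d.factorial * (d - t + 1) ^ (n - t) : ℕ) : ℚ) /
      (((d - t).factorial * (2 * d - 2 * t + 3) : ℕ) : ℚ)⌉₊ ≤ gammaUndir d t n := by
  have hcount := card_dbVtx_mul_factorial ht1 htd htn
  have hcover := card_dbVtx_le_gammaUndir_mul (d := d) (by omega) htn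
  have hdeg : 2 * (d - (t - 1)) + 1 = 2 * d - 2 * t + 3 := by omega
  rw [Nat.ceil_le, div_le_iff₀ (by positivity)]
  exact_mod_cast calc
    d.factorial * (d - t + 1) ^ (n - t) = Fintype.card (dbVtx d t n) * (d - t).factorial :=
      hcount.symm
    _ ≤ gammaUndir d t n * (2 * d - 2 * t + 3) * (d - t).factorial := by
      rw [← hdeg]; gcongr
    _ = gammaUndir d t n * ((d - t).factorial * (2 * d - 2 * t + 3)) := by ring

/-- `γ(cDB(d,t,n)) ≥ ⌈d! * (d-t+1)^(n-t) / ((d-t)! * (2d-2t+3))⌉`. -/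
theorem gammaUndir_lower (d t n : ℕ) (hd : 2 ≤ d) (hn : 2 ≤ n)
    (ht1 : 1 ≤ t) (htd : t ≤ d) (htn : t ≤ n) :
    ⌈((d.factorial * (d - t + 1) ^ (n - t) : ℕ) : ℚ) /
      (((d - t).factorial * (2 * d - 2 * t + 3) : ℕ) : ℚ)⌉₊ ≤ gammaUndir d t n :=
  gammaUndir_lower_general d t n ht1 htd htn
end

section
/- For every integer d ≥ 2, the domination number of the undirected de Bruijn graph of dimension 2 over a d-letter alphabet satisfies γ(cDB(d,1,2)) = d − 1. -/
namespace GU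
variable {d : ℕ}

def mk (a b : Fin d) : dbVtx d 1 2 :=
  ⟨![a, b], by
    intro i j hij _
    rw [Fin.lt_def] at hij
    omega⟩

@[simp] lemma mk_zero (a b : Fin d) : (mk a b).val 0 = a := rfl
@[simp] lemma mk_one (a b : Fin d) : (mk a b).val 1 = b := rfl

lemma vtx_ext {x y : dbVtx d 1 2} (h0 : x.val 0 = y.val 0) (h1 : x.val 1 = y.val 1) :
    x = y := by
  apply Subtype.ext; funext i; fin_cases i <;> assumption

lemma shift_iff {x y : dbVtx d 1 2} : dbShift x y ↔ y.val 0 = x.val 1 := by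
  constructor
  · intro h
    have h0 := h 0 (by norm_num)
    have : (⟨((0 : Fin 2) : ℕ) + 1, by norm_num⟩ : Fin 2) = 1 := by ext; simp
    rwa [this] at h0
  · intro h i hi
    have hi0 : i = 0 := by simp only [Fin.ext_iff, Fin.val_mk]; omega
    subst hi0
    have : (⟨((0 : Fin 2) : ℕ) + 1, hi⟩ : Fin 2) = 1 := by ext; simp
    rw [this]; exact h

lemma dom_iff {S : Set (dbVtx d 1 2)} (hS : dbUndirDominating S) (v : dbVtx d 1 2) :
    ∃ s ∈ S, s = v ∨ v.val 0 = s.val 1 ∨ s.val 0 = v.val 1 := by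
  obtain ⟨s, hsS, hs⟩ := hS v
  refine ⟨s, hsS, ?_⟩
  rcases hs with h | ⟨_, h | h⟩
  · exact Or.inl h
  · exact Or.inr (Or.inl (shift_iff.mp h))
  · exact Or.inr (Or.inr (shift_iff.mp h))

lemma dom_of (S : Set (dbVtx d 1 2))
    (h : ∀ v : dbVtx d 1 2, ∃ s ∈ S, s = v ∨ v.val 0 = s.val 1 ∨ s.val 0 = v.val 1) :
    dbUndirDominating S := by
  intro v
  obtain ⟨s, hsS, hs⟩ := h v
  refine ⟨s, hsS, ?_⟩
  by_cases hsv : s = v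
  · exact Or.inl hsv
  · rcases hs with h | h | h
    · exact Or.inl h
    · exact Or.inr ⟨hsv, Or.inl (shift_iff.mpr h)⟩
    · exact Or.inr ⟨hsv, Or.inr (shift_iff.mpr h)⟩


def g (hd : 2 ≤ d) (i : Fin (d - 1)) : dbVtx d 1 2 :=
  if (i : ℕ) = 0 then mk ⟨0, by omega⟩ ⟨d - 1, by omega⟩
  else mk ⟨i, by have := i.isLt; omega⟩ ⟨i, by have := i.isLt; omega⟩

lemma g_zero (hd : 2 ≤ d) (h : 0 < d - 1) :
    g hd ⟨0, h⟩ = mk ⟨0, by omega⟩ ⟨d - 1, by omega⟩ := if_pos rfl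

lemma g_inj (hd : 2 ≤ d) : Function.Injective (g hd) := by
  intro i j hij
  unfold g at hij
  by_cases hi : (i : ℕ) = 0 <;> by_cases hj : (j : ℕ) = 0 <;>
    simp [hi, hj] at hij
  · simp only [Fin.ext_iff, Fin.val_mk]; omega
  · have := congrArg (fun v => ((v : dbVtx d 1 2).val 0 : ℕ)) hij
    simp [mk_zero] at this
    omega
  · have := congrArg (fun v => ((v : dbVtx d 1 2).val 0 : ℕ)) hij
    simp [mk_zero] at this
    omega
  · have := congrArg (fun v => ((v : dbVtx d 1 2).val 0 : ℕ)) hij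
    simp [mk_zero] at this
    simp only [Fin.ext_iff, Fin.val_mk]; omega

lemma g_dom (hd : 2 ≤ d) : dbUndirDominating (Set.range (g hd)) := by
  apply dom_of
  intro v
  set a := v.val 0 with ha
  set b := v.val 1 with hb
  by_cases hb0 : (b : ℕ) = 0
  · refine ⟨g hd ⟨0, by omega⟩, Set.mem_range_self _, Or.inr (Or.inr ?_)⟩
    rw [g_zero hd (by omega), mk_zero]
    simp only [Fin.ext_iff, Fin.val_mk]; omega
  · by_cases ha1 : (a : ℕ) = d - 1
    · refine ⟨g hd ⟨0, by omega⟩, Set.mem_range_self _, Or.inr (Or.inl ?_)⟩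
      rw [g_zero hd (by omega), mk_one]
      simp only [Fin.ext_iff, Fin.val_mk]; omega
    · by_cases ha0 : (a : ℕ) = 0
      · by_cases hb1 : (b : ℕ) = d - 1
        · refine ⟨g hd ⟨0, by omega⟩, Set.mem_range_self _, Or.inl ?_⟩
          rw [g_zero hd (by omega)]
          exact vtx_ext (by rw [mk_zero]; simp only [Fin.ext_iff, Fin.val_mk]; omega) (by rw [mk_one]; simp only [Fin.ext_iff, Fin.val_mk]; omega)
        · have hblt : (b : ℕ) < d - 1 := by have := b.isLt; omega
          refine ⟨g hd ⟨b, hblt⟩, Set.mem_range_self _, Or.inr (Or.inr ?_)⟩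
          simp only [g, hb0, mk_zero]
          ext; simp
      · have halt : (a : ℕ) < d - 1 := by have := a.isLt; omega
        refine ⟨g hd ⟨a, halt⟩, Set.mem_range_self _, Or.inr (Or.inl ?_)⟩
        simp only [g, ha0, mk_one]
        ext; simp

lemma ub (hd : 2 ≤ d) : ∃ S : Set (dbVtx d 1 2), S.Finite ∧ S.ncard = d - 1 ∧
    dbUndirDominating S := by
  refine ⟨Set.range (g hd), Set.finite_range _, ?_, g_dom hd⟩
  rw [← Set.image_univ, Set.ncard_image_of_injective _ (g_inj hd), Set.ncard_univ,
    Nat.card_eq_fintype_card, Fintype.card_fin]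


lemma lb (hd : 2 ≤ d) {S : Set (dbVtx d 1 2)} (hfin : S.Finite)
    (hdom : dbUndirDominating S) : d - 1 ≤ S.ncard := by
  classical
  by_contra hklt
  push_neg at hklt
  set T : Finset (dbVtx d 1 2) := hfin.toFinset with hT
  have hTS : ∀ s, s ∈ T ↔ s ∈ S := fun s => hfin.mem_toFinset
  have hcard : T.card = S.ncard := (Set.ncard_eq_toFinset_card S hfin).symm
  set k := T.card with hk
  have hkd : k ≤ d - 2 := by omega
  set B : Finset (Fin d) := T.image (fun s => s.val 1) with hB
  set C : Finset (Fin d) := T.image (fun s => s.val 0) with hC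
  have hBk : B.card ≤ k := Finset.card_image_le
  have hCk : C.card ≤ k := Finset.card_image_le
  set X : Finset (Fin d) := Bᶜ with hXdef
  set Y : Finset (Fin d) := Cᶜ with hYdef
  have hXcard : X.card = d - B.card := by
    rw [hXdef, Finset.card_compl, Fintype.card_fin]
  have hYcard : Y.card = d - C.card := by
    rw [hYdef, Finset.card_compl, Fintype.card_fin]
  have hx2 : 2 ≤ X.card := by omega
  have hy2 : 2 ≤ Y.card := by omega
  have F1 : ∀ a ∈ X, ∀ b ∈ Y, mk a b ∈ T := by
    intro a haX b hbY
    obtain ⟨s, hsS, hs⟩ := dom_iff hdom (mk a b)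
    have hsT : s ∈ T := (hTS s).mpr hsS
    rcases hs with h | h | h
    · rwa [h] at hsT
    · exact absurd (Finset.mem_image.mpr ⟨s, hsT, ((mk_zero a b) ▸ h).symm⟩)
        (Finset.mem_compl.mp haX)
    · exact absurd (Finset.mem_image.mpr ⟨s, hsT, (mk_one a b) ▸ h⟩)
        (Finset.mem_compl.mp hbY)
  have hmkinj : Function.Injective (fun p : Fin d × Fin d => mk p.1 p.2) := by
    intro p q h
    have h0 := congrArg (fun v : dbVtx d 1 2 => v.val 0) h
    have h1 := congrArg (fun v : dbVtx d 1 2 => v.val 1) h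
    simp only [mk_zero, mk_one] at h0 h1
    exact Prod.ext h0 h1
  set P : Finset (dbVtx d 1 2) := (X ×ˢ Y).image (fun p => mk p.1 p.2) with hP
  have hPT : P ⊆ T := by
    intro v hv
    obtain ⟨p, hp, rfl⟩ := Finset.mem_image.mp hv
    obtain ⟨h1, h2⟩ := Finset.mem_product.mp hp
    exact F1 p.1 h1 p.2 h2
  have hPcard : P.card = X.card * Y.card := by
    rw [hP, Finset.card_image_of_injective _ hmkinj, Finset.card_product]
  have F2 : B ⊆ Y ∪ (T \ P).image (fun s => s.val 1) := by
    intro b hb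
    obtain ⟨s, hsT, hsb⟩ := Finset.mem_image.mp hb
    by_cases hsP : s ∈ P
    · obtain ⟨p, hp, hps⟩ := Finset.mem_image.mp hsP
      have hv1 : s.val 1 = p.2 := hps ▸ mk_one p.1 p.2
      apply Finset.mem_union_left
      rw [← hsb, hv1]
      exact (Finset.mem_product.mp hp).2
    · exact Finset.mem_union_right _
        (Finset.mem_image.mpr ⟨s, Finset.mem_sdiff.mpr ⟨hsT, hsP⟩, hsb⟩)
  have hBle : B.card ≤ Y.card + (k - P.card) := by
    calc B.card ≤ (Y ∪ (T \ P).image (fun s => s.val 1)).card :=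
          Finset.card_le_card F2
      _ ≤ Y.card + ((T \ P).image (fun s => s.val 1)).card := Finset.card_union_le _ _
      _ ≤ Y.card + (T \ P).card := by
          exact Nat.add_le_add_left Finset.card_image_le _
      _ = Y.card + (k - P.card) := by rw [Finset.card_sdiff_of_subset hPT]
  have hPk : P.card ≤ k := Finset.card_le_card hPT
  have hxy : X.card + Y.card ≤ X.card * Y.card := by nlinarith
  omega
end GU

/-- `γ(cDB(d,1,2)) = d - 1`. -/
theorem gammaUndir_deBruijn_two (d : ℕ) (hd : 2 ≤ d) :
    gammaUndir d 1 2 = d - 1 := by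
  have hmem : (d - 1) ∈
      {k | ∃ S : Set (dbVtx d 1 2), S.Finite ∧ S.ncard = k ∧ dbUndirDominating S} := by
    obtain ⟨S, h1, h2, h3⟩ := GU.ub hd
    exact ⟨S, h1, h2, h3⟩
  refine le_antisymm (Nat.sInf_le hmem) ?_
  apply le_csInf ⟨_, hmem⟩
  rintro k ⟨S, hfin, rfl, hdom⟩
  exact GU.lb hd hfin hdom
end

section
/- For every integer d ≥ 2, the domination number of the undirected de Bruijn graph of dimension 3 over a d-letter alphabet satisfies γ(cDB(d,1,3)) = d · ⌈d/2⌉. -/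
/-!
Vertices of `cDB(d,1,3)` are arbitrary words `(a, b, c)`. Sort a dominating set `S` by middle
letter `b`: let `m` be the number of its words with middle letter `b`, `r` and `q` the numbers of
distinct first and last letters among them (`heads`, `tails`), and `u` (resp. `v`) the number of
letters `a` (resp. `c`) such that no word of `S` ends in `a b` (resp. starts with `b c`)
(`tailMisses`, `headMisses`). The `u v` words `(a, b, c)` of the last kind must lie in `S`, whence
`u v + r ≤ m + u` and `u v + q ≤ m + v`; so the slack `2 m + d - r - q - u - v` is nonnegative,
while double counting shows that the slacks add up to `2 |S| - d²`. For odd `d` the total slack is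
at least `d - 1`: if `u = 0` or `v = 0` for every `b`, the signs of the `±d` that the letters
contribute cannot cancel; otherwise, up to reversing all words, some `b₀` has `u = 1` and slack
`d - 2`, which forces `{u, v} = {0, d}` and `r = q` for every other letter, and with `d` odd this
leaves a word `(a, b₀, a)` undominated. The matching construction is `halfCover`.
-/

open Finset

namespace Finset

theorem sum_card_add_sum_card_filter_notMem {α β : Type*} [Fintype α] [Fintype β]
    [DecidableEq β] (t : α → Finset β) :
    ∑ a, #(t a) + ∑ b, #(univ.filter (b ∉ t ·)) = Fintype.card α * Fintype.card β := by
  have hswap : ∑ b, #(univ.filter (b ∉ t ·)) = ∑ a, #(univ.filter (· ∉ t a)) := by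
    simp only [card_filter]
    exact sum_comm
  have hsplit (a : α) : #(t a) + #(univ.filter (· ∉ t a)) = Fintype.card β := by
    simpa using card_filter_add_card_filter_not (s := univ) (· ∈ t a)
  simp [hswap, ← sum_add_distrib, hsplit]

lemma mem_iff_mem_of_card_eq_of_odd {α : Type*} [Fintype α] [DecidableEq α] {s t : Finset α}
    {x : α} (hodd : Odd (Fintype.card α)) (hcard : #s = #t)
    (hcompl : ∀ y ≠ x, y ∈ s ↔ y ∉ t) : x ∈ s ↔ x ∈ t := by
  by_contra hx
  have hts : t = sᶜ := by
    ext y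
    rcases eq_or_ne y x with rfl | hy
    · rw [mem_compl]
      tauto
    · rw [mem_compl, hcompl y hy, not_not]
  have := card_compl s
  rw [← hts, ← hcard] at this
  obtain ⟨k, hk⟩ := hodd
  omega

end Finset

lemma Nat.ceil_natCast_div_two (d : ℕ) : ⌈(d : ℚ) / 2⌉₊ = (d + 1) / 2 := by
  rcases Nat.even_or_odd' d with ⟨k, rfl | rfl⟩
  · rw [show (2 * k + 1) / 2 = k by omega, Nat.cast_mul, Nat.cast_two,
      mul_div_cancel_left₀ _ two_ne_zero, Nat.ceil_natCast]
  · rw [show (2 * k + 1 + 1) / 2 = k + 1 by omega, Nat.ceil_eq_iff (by omega)]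
    push_cast
    constructor <;> linarith

namespace DeBruijnThree

abbrev Word (d : ℕ) := Fin d × Fin d × Fin d

variable {d : ℕ}

/-- `(a, b, c)` is dominated by an in-neighbour `(x, a, b)`, an out-neighbour `(b, c, z)` or
itself. -/
def IsDominating (S : Set (Word d)) : Prop :=
  ∀ a b c : Fin d, (∃ x, (x, a, b) ∈ S) ∨ (∃ z, (b, c, z) ∈ S) ∨ (a, b, c) ∈ S

def vertexEquiv : dbVtx d 1 3 ≃ Word d where
  toFun v := (v.1 0, v.1 1, v.1 2)
  invFun w := ⟨![w.1, w.2.1, w.2.2], fun i j hij _ => Nat.le_sub_of_add_le' hij⟩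
  left_inv v := Subtype.ext <| funext fun i => by fin_cases i <;> rfl
  right_inv _ := rfl

lemma dbShift_iff {x y : dbVtx d 1 3} :
    dbShift x y ↔
      (vertexEquiv x).2.1 = (vertexEquiv y).1 ∧ (vertexEquiv x).2.2 = (vertexEquiv y).2.1 := by
  refine ⟨fun h => ⟨(h 0 (by norm_num)).symm, (h 1 (by norm_num)).symm⟩, ?_⟩
  rintro ⟨h0, h1⟩ i hi
  fin_cases i
  · exact h0.symm
  · exact h1.symm
  · simp at hi

lemma eq_or_dbAdj_iff {t n : ℕ} {x y : dbVtx d t n} :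
    x = y ∨ dbAdj x y ↔ x = y ∨ dbShift x y ∨ dbShift y x := by
  by_cases h : x = y <;> simp [dbAdj, h]

lemma dbUndirDominating_preimage_iff (T : Set (Word d)) :
    dbUndirDominating (vertexEquiv ⁻¹' T) ↔ IsDominating T := by
  simp only [dbUndirDominating, eq_or_dbAdj_iff, dbShift_iff, Set.mem_preimage]
  rw [vertexEquiv.forall_congr_left]
  simp only [vertexEquiv.exists_congr_left (p := fun s => _ ∧ _), Equiv.apply_symm_apply,
    Equiv.symm_apply_eq]
  refine ⟨fun h a b c => ?_, fun h ⟨a, b, c⟩ => ?_⟩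
  · obtain ⟨⟨x, y, z⟩, hs, heq | ⟨rfl, rfl⟩ | ⟨rfl, rfl⟩⟩ := h (a, b, c)
    · exact Or.inr (Or.inr (heq ▸ hs))
    · exact Or.inl ⟨x, hs⟩
    · exact Or.inr (Or.inl ⟨z, hs⟩)
  · rcases h a b c with ⟨x, hx⟩ | ⟨z, hz⟩ | habc
    · exact ⟨(x, a, b), hx, Or.inr (Or.inl ⟨rfl, rfl⟩)⟩
    · exact ⟨(b, c, z), hz, Or.inr (Or.inr ⟨rfl, rfl⟩)⟩
    · exact ⟨(a, b, c), habc, Or.inl rfl⟩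

lemma gammaUndir_one_three_eq_sInf :
    gammaUndir d 1 3 =
      sInf {k | ∃ S : Finset (Word d), #S = k ∧ IsDominating (S : Set (Word d))} := by
  unfold gammaUndir
  congr 1
  ext k
  constructor
  · rintro ⟨S, hfin, rfl, hS⟩
    refine ⟨(hfin.image vertexEquiv).toFinset, ?_, ?_⟩
    · rw [← Set.ncard_eq_toFinset_card _, Set.ncard_image_of_injective _ vertexEquiv.injective]
    · rwa [Set.Finite.coe_toFinset, ← dbUndirDominating_preimage_iff, Equiv.preimage_image]
  · rintro ⟨S, rfl, hS⟩
    refine ⟨vertexEquiv ⁻¹' S, S.finite_toSet.preimage vertexEquiv.injective.injOn, ?_,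
      (dbUndirDominating_preimage_iff _).2 hS⟩
    rw [← Set.ncard_coe_finset,
      Set.ncard_preimage_of_injective_subset_range vertexEquiv.injective (by simp)]

/-- The words `(d - 1 - z, a, z)` with `z < ⌈d/2⌉`: a word `(a, b, c)` with `b < ⌈d/2⌉` has
the in-neighbour `(d - 1 - b, a, b)`, and one with `b ≥ ⌈d/2⌉` the out-neighbour
`(b, c, d - 1 - b)`. -/
def halfCover (d : ℕ) : Finset (Word d) :=
  (univ : Finset (Fin d × Fin ((d + 1) / 2))).image fun p =>
    ((Fin.castLE (by omega) p.2).rev, p.1, Fin.castLE (by omega) p.2)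

lemma card_halfCover : #(halfCover d) = d * ((d + 1) / 2) := by
  rw [halfCover, card_image_of_injective, card_univ, Fintype.card_prod, Fintype.card_fin,
    Fintype.card_fin]
  rintro ⟨a, z⟩ ⟨a', z'⟩ h
  simp only [Prod.mk.injEq, Fin.castLE_inj] at h
  simp [h.2.1, h.2.2]

lemma isDominating_halfCover : IsDominating (halfCover d : Set (Word d)) := by
  intro a b c
  simp only [halfCover, coe_image, coe_univ, Set.image_univ, Set.mem_range, Prod.mk.injEq,
    Prod.exists]
  by_cases hb : b.val < (d + 1) / 2
  · exact Or.inl ⟨b.rev, a, ⟨b, hb⟩, rfl, rfl, rfl⟩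
  · have hrev : b.rev.val < (d + 1) / 2 := by rw [Fin.val_rev]; omega
    exact Or.inr (Or.inl ⟨b.rev, c, ⟨b.rev, hrev⟩, Fin.rev_rev b, rfl, rfl⟩)

def fiber (S : Finset (Word d)) (b : Fin d) : Finset (Word d) := S.filter (·.2.1 = b)

def tails (S : Finset (Word d)) (a : Fin d) : Finset (Fin d) := (fiber S a).image (·.2.2)

def heads (S : Finset (Word d)) (c : Fin d) : Finset (Fin d) := (fiber S c).image (·.1)

def tailMisses (S : Finset (Word d)) (b : Fin d) : Finset (Fin d) :=
  univ.filter (b ∉ tails S ·)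

def headMisses (S : Finset (Word d)) (b : Fin d) : Finset (Fin d) :=
  univ.filter (b ∉ heads S ·)

variable {S : Finset (Word d)}

@[simp] lemma mem_tails {a z : Fin d} : z ∈ tails S a ↔ ∃ x, (x, a, z) ∈ S := by
  simp [tails, fiber]

@[simp] lemma mem_heads {c x : Fin d} : x ∈ heads S c ↔ ∃ z, (x, c, z) ∈ S := by
  simp [heads, fiber]

lemma isDominating_iff :
    IsDominating (S : Set (Word d)) ↔
      ∀ a b c, b ∈ tails S a ∨ b ∈ heads S c ∨ (a, b, c) ∈ S := by
  simp [IsDominating]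

def Word.rev (w : Word d) : Word d := (w.2.2, w.2.1, w.1)

lemma Word.rev_involutive : Function.Involutive (Word.rev (d := d)) := fun _ => rfl

def reverse (S : Finset (Word d)) : Finset (Word d) :=
  S.map ⟨Word.rev, Word.rev_involutive.injective⟩

@[simp] lemma mem_reverse {a b c : Fin d} : (a, b, c) ∈ reverse S ↔ (c, b, a) ∈ S := by
  simp only [reverse, mem_map, Function.Embedding.coeFn_mk]
  exact ⟨fun ⟨w, hw, h⟩ => by rwa [show (c, b, a) = Word.rev (a, b, c) from rfl, ← h],
    fun h => ⟨(c, b, a), h, rfl⟩⟩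

lemma tails_reverse (a : Fin d) : tails (reverse S) a = heads S a := by
  ext; simp

lemma heads_reverse (c : Fin d) : heads (reverse S) c = tails S c := by
  ext; simp

lemma tailMisses_reverse (b : Fin d) : tailMisses (reverse S) b = headMisses S b := by
  simp [tailMisses, headMisses, tails_reverse]

lemma headMisses_reverse (b : Fin d) : headMisses (reverse S) b = tailMisses S b := by
  simp [tailMisses, headMisses, heads_reverse]

lemma card_fiber_reverse (b : Fin d) : #(fiber (reverse S) b) = #(fiber S b) := by
  rw [fiber, reverse, filter_map, card_map]
  rfl

lemma IsDominating.reverse (hS : IsDominating (S : Set (Word d))) :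
    IsDominating (reverse S : Set (Word d)) := by
  rw [isDominating_iff] at hS ⊢
  intro a b c
  rw [tails_reverse, heads_reverse, mem_reverse]
  rcases hS c b a with h | h | h <;> simp [h]

def slack (S : Finset (Word d)) (b : Fin d) : ℤ :=
  2 * #(fiber S b) + d - #(heads S b) - #(tails S b) - #(tailMisses S b) - #(headMisses S b)

lemma sum_slack (S : Finset (Word d)) : ∑ b, slack S b = 2 * #S - d * d := by
  have hfib : ∑ b, #(fiber S b) = #S := (card_eq_sum_card_fiberwise fun _ _ => mem_univ _).symm
  have htails := sum_card_add_sum_card_filter_notMem (tails S)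
  have hheads := sum_card_add_sum_card_filter_notMem (heads S)
  simp only [Fintype.card_fin] at htails hheads
  simp only [slack, sum_sub_distrib, sum_add_distrib, ← mul_sum, sum_const, card_univ,
    Fintype.card_fin, nsmul_eq_mul]
  simp only [tailMisses, headMisses]
  push_cast [← Nat.cast_sum, hfib]
  omega

lemma slack_reverse (b : Fin d) : slack (reverse S) b = slack S b := by
  rw [slack, slack, card_fiber_reverse, heads_reverse, tails_reverse, tailMisses_reverse,
    headMisses_reverse]
  ring

/-- A word `(a, b, c)` with `a ∈ tailMisses S b` and `c ∈ headMisses S b` can only be dominated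
by itself, and the heads of `b` outside `tailMisses S b` come from the other words of the fiber. -/
lemma IsDominating.card_mul_card_add_card_heads_le (hS : IsDominating (S : Set (Word d)))
    (b : Fin d) :
    #(tailMisses S b) * #(headMisses S b) + #(heads S b) ≤ #(fiber S b) + #(tailMisses S b) := by
  rw [isDominating_iff] at hS
  set U := tailMisses S b
  set A := (fiber S b).filter (·.1 ∈ U)
  set B := (fiber S b).filter (·.1 ∉ U)
  have hA : #U * #(headMisses S b) ≤ #A := by
    rw [← card_product]
    refine card_le_card_of_injOn (fun p => (p.1, b, p.2)) (fun p hp => ?_) fun p _ q _ h => ?_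
    · simp only [U, tailMisses, headMisses, coe_product, Set.mem_prod, mem_coe, mem_filter,
        mem_univ, true_and] at hp
      have := (hS p.1 b p.2).resolve_left hp.1 |>.resolve_left hp.2
      exact mem_filter.2 ⟨mem_filter.2 ⟨this, rfl⟩, by simpa [U, tailMisses] using hp.1⟩
    · simpa [Prod.ext_iff] using h
  have hB : heads S b ⊆ B.image (·.1) ∪ U := by
    intro x hx
    by_cases hxU : x ∈ U
    · exact mem_union_right _ hxU
    obtain ⟨z, hz⟩ := mem_heads.1 hx
    exact mem_union_left _ (mem_image.2 ⟨(x, b, z), by simp [B, fiber, hz, hxU], rfl⟩)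
  have hAB : #A + #B = #(fiber S b) := card_filter_add_card_filter_not _
  have hBU : #(B.image (·.1) ∪ U) ≤ #B + #U :=
    (card_union_le _ _).trans (Nat.add_le_add_right card_image_le _)
  have := card_le_card hB
  omega

lemma IsDominating.card_mul_card_add_card_tails_le (hS : IsDominating (S : Set (Word d)))
    (b : Fin d) :
    #(tailMisses S b) * #(headMisses S b) + #(tails S b) ≤ #(fiber S b) + #(headMisses S b) := by
  have := hS.reverse.card_mul_card_add_card_heads_le b
  rwa [tailMisses_reverse, headMisses_reverse, heads_reverse, card_fiber_reverse,
    mul_comm] at this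

lemma abs_sub_add_le_slack (b : Fin d) :
    |(#(heads S b) : ℤ) - #(tails S b)| + (d - #(tailMisses S b) - #(headMisses S b)) ≤
      slack S b := by
  have hr : #(heads S b) ≤ #(fiber S b) := card_image_le
  have hq : #(tails S b) ≤ #(fiber S b) := card_image_le
  rw [slack]
  rcases abs_cases ((#(heads S b) : ℤ) - #(tails S b)) with ⟨habs, _⟩ | ⟨habs, _⟩ <;>
    rw [habs] <;> omega

lemma IsDominating.le_slack (hS : IsDominating (S : Set (Word d))) (b : Fin d) :
    d - 2 + 2 * ((#(tailMisses S b) : ℤ) - 1) * (#(headMisses S b) - 1) +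
      |((#(heads S b) : ℤ) - #(tails S b)) - (#(tailMisses S b) - #(headMisses S b))| ≤
      slack S b := by
  have hr : (#(tailMisses S b) * #(headMisses S b) + #(heads S b) : ℤ) ≤
      #(fiber S b) + #(tailMisses S b) := by
    exact_mod_cast hS.card_mul_card_add_card_heads_le b
  have hq : (#(tailMisses S b) * #(headMisses S b) + #(tails S b) : ℤ) ≤
      #(fiber S b) + #(headMisses S b) := by
    exact_mod_cast hS.card_mul_card_add_card_tails_le b
  rw [slack]
  rcases abs_cases (((#(heads S b) : ℤ) - #(tails S b)) -
      (#(tailMisses S b) - #(headMisses S b))) with ⟨habs, _⟩ | ⟨habs, _⟩ <;>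
    rw [habs] <;> linarith

lemma IsDominating.slack_nonneg (hS : IsDominating (S : Set (Word d))) (hd : 2 ≤ d)
    (b : Fin d) : 0 ≤ slack S b := by
  by_cases h : #(tailMisses S b) = 0 ∨ #(headMisses S b) = 0
  · have hu := card_finset_fin_le (tailMisses S b)
    have hv := card_finset_fin_le (headMisses S b)
    have huv : (#(tailMisses S b) : ℤ) + #(headMisses S b) ≤ d := by omega
    linarith [abs_sub_add_le_slack (S := S) b, abs_nonneg ((#(heads S b) : ℤ) - #(tails S b))]
  · rw [not_or] at h
    have hu : (1 : ℤ) ≤ #(tailMisses S b) := by exact_mod_cast Nat.one_le_iff_ne_zero.2 h.1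
    have hv : (1 : ℤ) ≤ #(headMisses S b) := by exact_mod_cast Nat.one_le_iff_ne_zero.2 h.2
    nlinarith [hS.le_slack b, abs_nonneg (((#(heads S b) : ℤ) - #(tails S b)) -
      (#(tailMisses S b) - #(headMisses S b)))]

lemma sum_card_headMisses_sub_card_tailMisses (S : Finset (Word d)) :
    ∑ b, ((#(headMisses S b) : ℤ) - #(tailMisses S b)) =
      ∑ b, ((#(tails S b) : ℤ) - #(heads S b)) := by
  have htails := sum_card_add_sum_card_filter_notMem (tails S)
  have hheads := sum_card_add_sum_card_filter_notMem (heads S)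
  simp only [Fintype.card_fin] at htails hheads
  simp only [sum_sub_distrib, tailMisses, headMisses]
  push_cast [← Nat.cast_sum]
  omega

lemma abs_sign_sub_add_le_slack {b : Fin d}
    (h : #(tailMisses S b) = 0 ∨ #(headMisses S b) = 0) :
    |(if #(tailMisses S b) = 0 then (d : ℤ) else -d) -
        (#(headMisses S b) - #(tailMisses S b)) + (#(tails S b) - #(heads S b))| ≤
      slack S b := by
  have := abs_sub_add_le_slack (S := S) b
  have hu := card_finset_fin_le (tailMisses S b)
  have hv := card_finset_fin_le (headMisses S b)
  rw [abs_le]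
  rcases abs_cases ((#(heads S b) : ℤ) - #(tails S b)) with ⟨habs, _⟩ | ⟨habs, _⟩ <;>
    rw [habs] at this <;> split_ifs <;> omega

/-- The terms `v - u` and `q - r` cancel in total, so the signs `±d` of the letters add up to at
most the total slack; for odd `d` they cannot cancel. -/
lemma le_sum_slack_of_forall_pure (hodd : Odd d)
    (hpure : ∀ b, #(tailMisses S b) = 0 ∨ #(headMisses S b) = 0) :
    (d : ℤ) ≤ ∑ b, slack S b := by
  set σ : Fin d → ℤ := fun b => if #(tailMisses S b) = 0 then (d : ℤ) else -d
  set P := univ.filter fun b => #(tailMisses S b) = 0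
  have hσ : ∑ b, σ b = d * (2 * #P - d) := by
    have hP := card_filter_add_card_filter_not (s := univ) fun b => #(tailMisses S b) = 0
    rw [card_univ, Fintype.card_fin] at hP
    simp only [σ, sum_ite, sum_const, nsmul_eq_mul]
    push_cast [← hP]
    ring
  have hne : (2 * #P - d : ℤ) ≠ 0 := by
    obtain ⟨k, rfl⟩ := hodd
    omega
  calc (d : ℤ) ≤ |(d : ℤ) * (2 * #P - d)| := by
        rw [abs_mul, Nat.abs_cast]
        exact le_mul_of_one_le_right (Nat.cast_nonneg d) (Int.one_le_abs hne)
    _ = |∑ b, (σ b - ((#(headMisses S b) : ℤ) - #(tailMisses S b)) +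
          ((#(tails S b) : ℤ) - #(heads S b)))| := by
        rw [sum_add_distrib, sum_sub_distrib, sum_card_headMisses_sub_card_tailMisses, hσ]
        ring_nf
    _ ≤ ∑ b, |σ b - ((#(headMisses S b) : ℤ) - #(tailMisses S b)) +
          ((#(tails S b) : ℤ) - #(heads S b))| :=
        abs_sum_le_sum_abs _ _
    _ ≤ ∑ b, slack S b := sum_le_sum fun b _ => abs_sign_sub_add_le_slack (hpure b)

lemma IsDominating.forall_mem_tails_iff_of_slack_eq_zero (hS : IsDominating (S : Set (Word d)))
    (hd : 3 ≤ d) {β : Fin d} (h0 : slack S β = 0) :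
    (∀ a c, β ∈ tails S a ↔ β ∉ heads S c) ∧ #(heads S β) = #(tails S β) := by
  have hpure : #(tailMisses S β) = 0 ∨ #(headMisses S β) = 0 := by
    by_contra! h
    have hu : (1 : ℤ) ≤ #(tailMisses S β) := by exact_mod_cast Nat.one_le_iff_ne_zero.2 h.1
    have hv : (1 : ℤ) ≤ #(headMisses S β) := by exact_mod_cast Nat.one_le_iff_ne_zero.2 h.2
    nlinarith [hS.le_slack β, abs_nonneg (((#(heads S β) : ℤ) - #(tails S β)) -
      (#(tailMisses S β) - #(headMisses S β)))]
  have hslack := abs_sub_add_le_slack (S := S) β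
  have hu := card_finset_fin_le (tailMisses S β)
  have hv := card_finset_fin_le (headMisses S β)
  rw [h0] at hslack
  have hrq : #(heads S β) = #(tails S β) ∧
      (#(tailMisses S β) = 0 ∧ #(headMisses S β) = d ∨
        #(tailMisses S β) = d ∧ #(headMisses S β) = 0) := by
    rcases abs_cases ((#(heads S β) : ℤ) - #(tails S β)) with ⟨habs, _⟩ | ⟨habs, _⟩ <;>
      rw [habs] at hslack <;> omega
  refine ⟨fun a c => ?_, hrq.1⟩
  rcases hrq.2 with ⟨hu0, hvd⟩ | ⟨hud, hv0⟩
  · have ha := card_filter_eq_zero_iff.1 hu0 a (mem_univ a)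
    have hc := card_filter_eq_iff.1 (hvd.trans (card_fin d).symm) c (mem_univ c)
    simp only [not_not] at ha
    simp [ha, hc]
  · have ha := card_filter_eq_iff.1 (hud.trans (card_fin d).symm) a (mem_univ a)
    have hc := card_filter_eq_zero_iff.1 hv0 c (mem_univ c)
    simp only [not_not] at hc
    simp [ha, hc]

/-- If `a` is the only letter with `b₀ ∉ tails S a`, then the word `(a, b₀, a)` cannot be
dominated. -/
lemma IsDominating.false_of_card_tailMisses_eq_one (hS : IsDominating (S : Set (Word d)))
    (hodd : Odd d) {b₀ : Fin d} (hu : #(tailMisses S b₀) = 1)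
    (hv : (headMisses S b₀).Nonempty)
    (hext : ∀ β ≠ b₀, (∀ a c, β ∈ tails S a ↔ β ∉ heads S c) ∧
      #(heads S β) = #(tails S β)) :
    False := by
  have hagree : ∀ β ≠ b₀, b₀ ∈ tails S β ↔ b₀ ∈ heads S β := fun β hβ =>
    mem_iff_mem_of_card_eq_of_odd (by simpa using hodd) (hext β hβ).2.symm
      fun γ hγ => (hext γ hγ).1 β β
  obtain ⟨a, ha⟩ := card_eq_one.1 hu
  have hmiss (a' : Fin d) : b₀ ∉ tails S a' ↔ a' = a := by
    simpa [tailMisses] using congrArg (a' ∈ ·) ha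
  rw [isDominating_iff] at hS
  rcases hS a b₀ a with h | h | h
  · exact (hmiss a).2 rfl h
  · rcases eq_or_ne a b₀ with rfl | hab
    · obtain ⟨c, hc⟩ := hv
      have hc : a ∉ heads S c := by simpa [headMisses] using hc
      have hca : c ≠ a := fun hca => hc (hca ▸ h)
      exact hca ((hmiss c).1 fun ht => hc ((hagree c hca).1 ht))
    · exact (hmiss a).2 rfl ((hagree a hab).2 h)
  · have hta : a ∈ tails S b₀ := mem_tails.2 ⟨a, h⟩
    rcases eq_or_ne a b₀ with rfl | hab
    · exact (hmiss a).2 rfl hta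
    · exact ((hext a hab).1 b₀ b₀).1 hta (mem_heads.2 ⟨a, h⟩)

lemma IsDominating.sub_one_le_sum_slack_of_card_tailMisses_eq_one
    (hS : IsDominating (S : Set (Word d))) (hd : 3 ≤ d) (hodd : Odd d) {b₀ : Fin d}
    (hu : #(tailMisses S b₀) = 1) (hv : (headMisses S b₀).Nonempty) :
    (d : ℤ) - 1 ≤ ∑ b, slack S b := by
  by_contra! hsmall
  have hnonneg (β : Fin d) (_ : β ∈ univ.erase b₀) : 0 ≤ slack S β :=
    hS.slack_nonneg (by omega) β
  have hb₀ : (d : ℤ) - 2 ≤ slack S b₀ := by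
    have := hS.le_slack b₀
    rw [hu] at this
    push_cast at this
    linarith [abs_nonneg (((#(heads S b₀) : ℤ) - #(tails S b₀)) - (1 - #(headMisses S b₀)))]
  have hrest : ∑ β ∈ univ.erase b₀, slack S β = 0 := by
    have := add_sum_erase univ (slack S) (mem_univ b₀)
    exact le_antisymm (by linarith) (sum_nonneg hnonneg)
  refine hS.false_of_card_tailMisses_eq_one hodd hu hv fun β hβ =>
    hS.forall_mem_tails_iff_of_slack_eq_zero hd ?_
  exact (sum_eq_zero_iff_of_nonneg hnonneg).1 hrest β (mem_erase.2 ⟨hβ, mem_univ β⟩)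

lemma IsDominating.sub_one_le_sum_slack (hS : IsDominating (S : Set (Word d))) (hd : 3 ≤ d)
    (hodd : Odd d) : (d : ℤ) - 1 ≤ ∑ b, slack S b := by
  by_cases hpure : ∀ b, #(tailMisses S b) = 0 ∨ #(headMisses S b) = 0
  · linarith [le_sum_slack_of_forall_pure hodd hpure]
  simp only [not_forall, not_or] at hpure
  obtain ⟨b, hu, hv⟩ := hpure
  rcases (show #(tailMisses S b) = 1 ∨ #(headMisses S b) = 1 ∨
      (2 ≤ #(tailMisses S b) ∧ 2 ≤ #(headMisses S b)) by omega) with h | h | ⟨hu2, hv2⟩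
  · exact hS.sub_one_le_sum_slack_of_card_tailMisses_eq_one hd hodd h
      (card_pos.1 (Nat.pos_of_ne_zero hv))
  · have := hS.reverse.sub_one_le_sum_slack_of_card_tailMisses_eq_one hd hodd (b₀ := b)
      (by rwa [tailMisses_reverse])
      (by rw [headMisses_reverse]; exact card_pos.1 (Nat.pos_of_ne_zero hu))
    simpa only [slack_reverse] using this
  · have hu2' : (2 : ℤ) ≤ #(tailMisses S b) := by exact_mod_cast hu2
    have hv2' : (2 : ℤ) ≤ #(headMisses S b) := by exact_mod_cast hv2
    have hb := single_le_sum (fun β _ => hS.slack_nonneg (by omega) β) (mem_univ b)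
    nlinarith [hS.le_slack b, abs_nonneg (((#(heads S b) : ℤ) - #(tails S b)) -
      (#(tailMisses S b) - #(headMisses S b)))]

theorem IsDominating.mul_half_le_card (hS : IsDominating (S : Set (Word d))) (hd : 2 ≤ d) :
    d * ((d + 1) / 2) ≤ #S := by
  have hsum := sum_slack S
  rcases Nat.even_or_odd d with ⟨k, rfl⟩ | hodd
  · have := sum_nonneg (s := univ) fun b _ => hS.slack_nonneg hd b
    rw [show (k + k + 1) / 2 = k by omega]
    zify at hsum ⊢
    nlinarith
  · have := hS.sub_one_le_sum_slack (by obtain ⟨k, rfl⟩ := hodd; omega) hodd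
    obtain ⟨k, rfl⟩ := hodd
    rw [show (2 * k + 1 + 1) / 2 = k + 1 by omega]
    push_cast at hsum this ⊢
    nlinarith

end DeBruijnThree

open DeBruijnThree

/-- `γ(cDB(d,1,3)) = d * ⌈d/2⌉`. -/
theorem gammaUndir_deBruijn_three (d : ℕ) (hd : 2 ≤ d) :
    gammaUndir d 1 3 = d * ⌈(d : ℚ) / 2⌉₊ := by
  rw [gammaUndir_one_three_eq_sInf, Nat.ceil_natCast_div_two, ← card_halfCover]
  refine le_antisymm (Nat.sInf_le ⟨_, rfl, isDominating_halfCover⟩) ?_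
  refine le_csInf ⟨_, _, rfl, isDominating_halfCover⟩ ?_
  rintro k ⟨S, rfl, hS⟩
  exact card_halfCover.trans_le (hS.mul_half_le_card hd)
end

section
/- For all integers d ≥ 2 and n ≥ 4, the domination number of the undirected de Bruijn graph of dimension n over a d-letter alphabet satisfies d^n/(2d+1) ≤ γ(cDB(d,1,n)) ≤ (d−1) · d^{n−2}. -/
/-! ### Auxiliary material -/

section Aux

variable {d n : ℕ}

lemma dbConstrained_one (f : Fin n → Fin d) : dbConstrained d 1 n f := by
  intro i j hij _
  have : (i : ℕ) < j := hij
  omega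

/-- Build a vertex of the 1-constrained de Bruijn graph from an arbitrary word. -/
def mkV (f : Fin n → Fin d) : dbVtx d 1 n := ⟨f, dbConstrained_one f⟩

lemma val_congr (x : Fin n → Fin d) {i j : Fin n} (h : (i : ℕ) = (j : ℕ)) :
    x i = x j := by congr 1; exact Fin.ext h

/-- Out-neighbor of `s` obtained by appending `b`. -/
def outV (s : dbVtx d 1 n) (b : Fin d) : dbVtx d 1 n :=
  mkV (fun i => if h : (i : ℕ) + 1 < n then s.val ⟨(i : ℕ) + 1, h⟩ else b)

/-- In-neighbor of `s` obtained by prepending `a`. -/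
def innV (s : dbVtx d 1 n) (a : Fin d) : dbVtx d 1 n :=
  mkV (fun i => if (i : ℕ) = 0 then a
    else s.val ⟨(i : ℕ) - 1, by have := i.isLt; omega⟩)

lemma outV_val_of_lt (s : dbVtx d 1 n) (b : Fin d) {i : Fin n} (h : (i : ℕ) + 1 < n) :
    (outV s b).val i = s.val ⟨(i : ℕ) + 1, h⟩ := by
  simp only [outV, mkV, dif_pos h]

lemma outV_val_of_last (s : dbVtx d 1 n) (b : Fin d) {i : Fin n} (h : ¬ ((i : ℕ) + 1 < n)) :
    (outV s b).val i = b := by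
  simp only [outV, mkV, dif_neg h]

lemma innV_val_of_zero (s : dbVtx d 1 n) (a : Fin d) {i : Fin n} (h : (i : ℕ) = 0) :
    (innV s a).val i = a := by
  simp only [innV, mkV, if_pos h]

lemma innV_val_of_pos (s : dbVtx d 1 n) (a : Fin d) {i : Fin n} (h : (i : ℕ) ≠ 0) :
    (innV s a).val i = s.val ⟨(i : ℕ) - 1, by have := i.isLt; omega⟩ := by
  simp only [innV, mkV, if_neg h]

lemma outV_val' (s : dbVtx d 1 n) (b : Fin d) {i : Fin n} {k : ℕ} (hk : k < n)
    (h : (i : ℕ) + 1 < n) (hik : (i : ℕ) + 1 = k) :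
    (outV s b).val i = s.val ⟨k, hk⟩ :=
  (outV_val_of_lt s b h).trans (val_congr s.val hik)

lemma innV_val' (s : dbVtx d 1 n) (a : Fin d) {i : Fin n} {k : ℕ} (hk : k < n)
    (h : (i : ℕ) ≠ 0) (hik : (i : ℕ) - 1 = k) :
    (innV s a).val i = s.val ⟨k, hk⟩ :=
  (innV_val_of_pos s a h).trans (val_congr s.val hik)

lemma dbShift_outV (s : dbVtx d 1 n) (b : Fin d) : dbShift s (outV s b) := by
  intro i h
  exact outV_val_of_lt s b h

lemma dbShift_innV (s : dbVtx d 1 n) (a : Fin d) : dbShift (innV s a) s := by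
  intro i h
  rw [innV_val_of_pos s a (show (i : ℕ) + 1 ≠ 0 by omega)]
  exact val_congr s.val (show (i : ℕ) = (i : ℕ) + 1 - 1 by omega)

lemma eq_outV {s v : dbVtx d 1 n} (hn : 0 < n) (h : dbShift s v) :
    v = outV s (v.val ⟨n - 1, by omega⟩) := by
  apply Subtype.ext; funext i
  by_cases hi : (i : ℕ) + 1 < n
  · rw [outV_val_of_lt s _ hi]; exact h i hi
  · rw [outV_val_of_last s _ hi]
    exact val_congr v.val (show (i : ℕ) = n - 1 by have := i.isLt; omega)

lemma eq_innV {s v : dbVtx d 1 n} (hn : 0 < n) (h : dbShift v s) :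
    v = innV s (v.val ⟨0, hn⟩) := by
  apply Subtype.ext; funext i
  by_cases hi : (i : ℕ) = 0
  · rw [innV_val_of_zero s _ hi]; exact val_congr v.val hi
  · rw [innV_val_of_pos s _ hi]
    have hlt : ((i : ℕ) - 1) + 1 < n := by have := i.isLt; omega
    have := h ⟨(i : ℕ) - 1, by have := i.isLt; omega⟩ hlt
    rw [this]
    exact (val_congr v.val (show (i : ℕ) - 1 + 1 = (i : ℕ) by omega)).symm

/-- Counting: the whole graph has `d ^ n` vertices. -/
lemma card_dbVtx : Nat.card (dbVtx d 1 n) = d ^ n := by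
  classical
  rw [Nat.card_congr (Equiv.subtypeUnivEquiv dbConstrained_one)]
  simp [Nat.card_eq_fintype_card]

/-- Lower bound: any finite dominating set `S` satisfies `d^n ≤ (2d+1)|S|`. -/
lemma db_lower_bound {S : Set (dbVtx d 1 n)} (hn : 4 ≤ n) (hS : S.Finite)
    (hdom : dbUndirDominating S) : d ^ n ≤ (2 * d + 1) * S.ncard := by
  classical
  haveI : Fintype (dbVtx d 1 n) := Fintype.ofFinite _
  set T := hS.toFinset with hT
  have hTcard : T.card = S.ncard := (Set.ncard_eq_toFinset_card S hS).symm
  set N : dbVtx d 1 n → Finset (dbVtx d 1 n) := fun s =>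
    insert s ((Finset.univ.image (outV s)) ∪ (Finset.univ.image (innV s))) with hN
  have hNcard : ∀ s, (N s).card ≤ 2 * d + 1 := by
    intro s
    calc (N s).card ≤ ((Finset.univ.image (outV s)) ∪ (Finset.univ.image (innV s))).card + 1 :=
          Finset.card_insert_le _ _
      _ ≤ ((Finset.univ.image (outV s)).card + (Finset.univ.image (innV s)).card) + 1 := by
          exact Nat.add_le_add_right (Finset.card_union_le _ _) 1
      _ ≤ (d + d) + 1 := by
          refine Nat.add_le_add_right (Nat.add_le_add ?_ ?_) 1 <;>
            exact le_trans Finset.card_image_le (by simp)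
      _ = 2 * d + 1 := by ring
  have hcover : (Finset.univ : Finset (dbVtx d 1 n)) ⊆ T.biUnion N := by
    intro v _
    obtain ⟨s, hsS, hsv⟩ := hdom v
    have hsT : s ∈ T := by rw [hT]; exact hS.mem_toFinset.mpr hsS
    refine Finset.mem_biUnion.mpr ⟨s, hsT, ?_⟩
    rcases hsv with rfl | ⟨hne, hsh | hsh⟩
    · exact Finset.mem_insert_self _ _
    · have := eq_outV (by omega : 0 < n) hsh
      refine Finset.mem_insert.mpr (Or.inr (Finset.mem_union_left _ ?_))
      exact Finset.mem_image.mpr ⟨_, Finset.mem_univ _, this.symm⟩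
    · have := eq_innV (by omega : 0 < n) hsh
      refine Finset.mem_insert.mpr (Or.inr (Finset.mem_union_right _ ?_))
      exact Finset.mem_image.mpr ⟨_, Finset.mem_univ _, this.symm⟩
  have h1 : Fintype.card (dbVtx d 1 n) ≤ (T.biUnion N).card := by
    rw [← Finset.card_univ]
    exact Finset.card_le_card hcover
  have h2 : (T.biUnion N).card ≤ T.card * (2 * d + 1) := by
    calc (T.biUnion N).card ≤ ∑ s ∈ T, (N s).card := Finset.card_biUnion_le
      _ ≤ ∑ _s ∈ T, (2 * d + 1) := Finset.sum_le_sum (fun s _ => hNcard s)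
      _ = T.card * (2 * d + 1) := by rw [Finset.sum_const, smul_eq_mul]
  have h3 : Fintype.card (dbVtx d 1 n) = d ^ n := by
    rw [← Nat.card_eq_fintype_card]; exact card_dbVtx
  rw [h3] at h1
  calc d ^ n ≤ T.card * (2 * d + 1) := le_trans h1 h2
    _ = (2 * d + 1) * S.ncard := by rw [hTcard, Nat.mul_comm]

variable [NeZero d]

lemma fin_add_one_ne (hd : 2 ≤ d) (x : Fin d) : x + 1 ≠ x := by
  intro hh
  have h0 : (1 : Fin d) = 0 := left_eq_add.mp hh.symm
  have h2 : ((1 : Fin d) : ℕ) = ((0 : Fin d) : ℕ) := by rw [h0]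
  rw [Fin.val_one' d, Fin.val_zero] at h2
  have : 1 % d = 1 := Nat.mod_eq_of_lt (by omega)
  omega

/-- The dominating set: words whose last symbol is the second symbol plus one,
and whose next-to-last symbol is not the first symbol plus one. -/
def domSet (d n : ℕ) [NeZero d] (hn : 4 ≤ n) : Set (dbVtx d 1 n) :=
  {x | x.val ⟨n - 1, by omega⟩ = x.val ⟨1, by omega⟩ + 1 ∧
       x.val ⟨n - 2, by omega⟩ ≠ x.val ⟨0, by omega⟩ + 1}

set_option maxHeartbeats 2000000 in
lemma domSet_dominating (hd : 2 ≤ d) (hn : 4 ≤ n) :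
    dbUndirDominating (domSet d n hn) := by
  intro v
  by_cases hA : v.val ⟨n - 1, by omega⟩ = v.val ⟨1, by omega⟩ + 1
  · by_cases hB : v.val ⟨n - 2, by omega⟩ ≠ v.val ⟨0, by omega⟩ + 1
    · -- v itself is in the dominating set
      exact ⟨v, ⟨hA, hB⟩, Or.inl rfl⟩
    · -- prepend a = v_{n-3}
      push_neg at hB
      set a := v.val ⟨n - 3, by omega⟩ with ha
      have e1 : (innV v a).val ⟨n - 1, by omega⟩ = v.val ⟨n - 2, by omega⟩ :=
        innV_val' v a (by omega) (show n - 1 ≠ 0 by omega) (show n - 1 - 1 = n - 2 by omega)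
      have e2 : (innV v a).val ⟨1, by omega⟩ = v.val ⟨0, by omega⟩ :=
        innV_val' v a (by omega) (show (1 : ℕ) ≠ 0 by omega) (show 1 - 1 = 0 by omega)
      have e3 : (innV v a).val ⟨n - 2, by omega⟩ = v.val ⟨n - 3, by omega⟩ :=
        innV_val' v a (by omega) (show n - 2 ≠ 0 by omega) (show n - 2 - 1 = n - 3 by omega)
      have e4 : (innV v a).val ⟨0, by omega⟩ = a :=
        innV_val_of_zero v a (show ((0 : ℕ)) = 0 from rfl)
      refine ⟨innV v a, ⟨?_, ?_⟩, ?_⟩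
      · exact e1.trans (hB.trans (congrArg (fun t => t + 1) e2.symm))
      · intro hcon
        exact fin_add_one_ne hd a
          ((e3.symm.trans (hcon.trans (congrArg (fun t => t + 1) e4))).symm)
      · by_cases hv : innV v a = v
        · exact Or.inl hv
        · exact Or.inr ⟨hv, Or.inl (dbShift_innV v a)⟩
  · -- append b = v_2 + 1
    set b := v.val ⟨2, by omega⟩ + 1 with hb
    have e1 : (outV v b).val ⟨n - 1, by omega⟩ = b :=
      outV_val_of_last v b (show ¬ (n - 1 + 1 < n) by omega)
    have e2 : (outV v b).val ⟨1, by omega⟩ = v.val ⟨2, by omega⟩ :=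
      outV_val' v b (by omega) (show 1 + 1 < n by omega) (show 1 + 1 = 2 by norm_num)
    have e3 : (outV v b).val ⟨n - 2, by omega⟩ = v.val ⟨n - 1, by omega⟩ :=
      outV_val' v b (by omega) (show n - 2 + 1 < n by omega) (show n - 2 + 1 = n - 1 by omega)
    have e4 : (outV v b).val ⟨0, by omega⟩ = v.val ⟨1, by omega⟩ :=
      outV_val' v b (by omega) (show 0 + 1 < n by omega) (show 0 + 1 = 1 by norm_num)
    refine ⟨outV v b, ⟨?_, ?_⟩, ?_⟩
    · exact e1.trans (congrArg (fun t => t + 1) e2.symm)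
    · intro hcon
      exact hA (e3.symm.trans (hcon.trans (congrArg (fun t => t + 1) e4)))
    · by_cases hv : outV v b = v
      · exact Or.inl hv
      · exact Or.inr ⟨hv, Or.inr (dbShift_outV v b)⟩

set_option maxHeartbeats 2000000 in
lemma domSet_ncard (hd : 2 ≤ d) (hn : 4 ≤ n) :
    (domSet d n hn).ncard ≤ (d - 1) * d ^ (n - 2) := by
  classical
  have h01 : (0 : Fin d) ≠ 1 := by
    intro h
    have := congrArg Fin.val h
    rw [Fin.val_zero, Fin.val_one' d] at this
    have h1 : 1 % d = 1 := Nat.mod_eq_of_lt (by omega)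
    omega
  set φ : dbVtx d 1 n → ((Fin (n - 2) → Fin d) × {c : Fin d // c ≠ 1}) := fun x =>
    (fun j => x.val ⟨(j : ℕ), by have := j.isLt; omega⟩,
     if h : x.val ⟨n - 2, by omega⟩ - x.val ⟨0, by omega⟩ ≠ 1 then
       ⟨x.val ⟨n - 2, by omega⟩ - x.val ⟨0, by omega⟩, h⟩
     else ⟨0, h01⟩) with hφ
  have hkey : ∀ x ∈ domSet d n hn,
      x.val ⟨n - 2, by omega⟩ - x.val ⟨0, by omega⟩ ≠ 1 := by
    intro x hx hc
    exact hx.2 (by rw [sub_eq_iff_eq_add.mp hc, add_comm])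
  have hsnd : ∀ x ∈ domSet d n hn,
      ((φ x).2 : Fin d) = x.val ⟨n - 2, by omega⟩ - x.val ⟨0, by omega⟩ := by
    intro x hx
    simp only [hφ, dif_pos (hkey x hx)]
  have hinj : Set.InjOn φ (domSet d n hn) := by
    intro x hx y hy hxy
    have h1 : ∀ j : Fin (n - 2), x.val ⟨(j : ℕ), by have := j.isLt; omega⟩ =
        y.val ⟨(j : ℕ), by have := j.isLt; omega⟩ := by
      intro j
      exact congrFun (congrArg Prod.fst hxy) j
    have h2 : x.val ⟨n - 2, by omega⟩ - x.val ⟨0, by omega⟩ =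
        y.val ⟨n - 2, by omega⟩ - y.val ⟨0, by omega⟩ := by
      rw [← hsnd x hx, ← hsnd y hy, hxy]
    have h0 : x.val ⟨0, by omega⟩ = y.val ⟨0, by omega⟩ := h1 ⟨0, by omega⟩
    have hlast2 : x.val ⟨n - 2, by omega⟩ = y.val ⟨n - 2, by omega⟩ :=
      sub_left_inj.mp (h2.trans (congrArg (fun t => y.val ⟨n - 2, by omega⟩ - t) h0.symm))
    have hone : x.val ⟨1, by omega⟩ = y.val ⟨1, by omega⟩ := h1 ⟨1, by omega⟩
    apply Subtype.ext; funext i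
    rcases Nat.lt_trichotomy (i : ℕ) (n - 2) with hi | hi | hi
    · exact h1 ⟨(i : ℕ), hi⟩
    · exact (val_congr x.val (j := ⟨n - 2, by omega⟩) hi).trans
        (hlast2.trans (val_congr y.val (i := ⟨n - 2, by omega⟩) (j := i) hi.symm))
    · have hi' : (i : ℕ) = n - 1 := by have := i.isLt; omega
      exact (val_congr x.val (j := ⟨n - 1, by omega⟩) hi').trans
        (hx.1.trans ((congrArg (fun t => t + 1) hone).trans
          (hy.1.symm.trans (val_congr y.val (i := ⟨n - 1, by omega⟩) (j := i) hi'.symm))))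
  have hle := Set.ncard_le_ncard_of_injOn φ
    (fun x _ => (Set.mem_univ (φ x))) hinj (Set.toFinite _)
  refine le_trans hle (le_of_eq ?_)
  rw [Set.ncard_univ, Nat.card_eq_fintype_card, Fintype.card_prod, Fintype.card_fun,
    Fintype.card_fin, Fintype.card_fin]
  have : Fintype.card {c : Fin d // c ≠ 1} = d - 1 := by
    rw [Fintype.card_subtype_compl]
    simp
  rw [this, Nat.mul_comm]

end Aux

/-- `d^n/(2d+1) ≤ γ(cDB(d,1,n)) ≤ (d-1) * d^(n-2)` for `n ≥ 4`. -/
theorem gammaUndir_deBruijn_bounds (d n : ℕ) (hd : 2 ≤ d) (hn : 4 ≤ n) :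
    (d : ℚ) ^ n / (2 * d + 1) ≤ (gammaUndir d 1 n : ℚ) ∧
    gammaUndir d 1 n ≤ (d - 1) * d ^ (n - 2) := by
  haveI : NeZero d := ⟨by omega⟩
  have hne : {k | ∃ S : Set (dbVtx d 1 n), S.Finite ∧ S.ncard = k ∧
      dbUndirDominating S}.Nonempty :=
    ⟨(domSet d n hn).ncard, domSet d n hn, Set.toFinite _, rfl, domSet_dominating hd hn⟩
  constructor
  · obtain ⟨S, hfin, hcard, hdom⟩ := Nat.sInf_mem hne
    have hlow : d ^ n ≤ (2 * d + 1) * gammaUndir d 1 n := by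
      rw [gammaUndir, ← hcard]
      exact db_lower_bound hn hfin hdom
    rw [div_le_iff₀ (by positivity)]
    have : ((d : ℚ)) ^ n ≤ ((2 * d + 1 : ℕ) : ℚ) * ((gammaUndir d 1 n : ℕ) : ℚ) := by
      rw [← Nat.cast_pow, ← Nat.cast_mul]
      exact_mod_cast hlow
    push_cast at this ⊢
    linarith
  · refine le_trans (Nat.sInf_le ?_) (domSet_ncard hd hn)
    exact ⟨domSet d n hn, Set.toFinite _, rfl, domSet_dominating hd hn⟩
end

section
/- For all integers d ≥ 2 and n ≥ 4, the domination number of the undirected Kautz graph of dimension n over a d-letter alphabet satisfies d(d−1)^{n−1}/(2d−1) ≤ γ(cDB(d,2,n)) ≤ (d−1)^{n−1} − (d−2)(d−1)^{n−4}. -/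
instance inst_s8 (d t n : ℕ) : DecidablePred (dbConstrained d t n) := fun x => by
  unfold dbConstrained; infer_instance

instance (d t n : ℕ) : Fintype (dbVtx d t n) := Subtype.fintype _

instance {d t n : ℕ} (x y : dbVtx d t n) : Decidable (dbShift x y) := by
  unfold dbShift; infer_instance



namespace DBaux

variable {d n : ℕ}

def up (c : Fin (d-1)) : Fin d := ⟨c.val + 1, by have := c.isLt; omega⟩

def down (hd : 2 ≤ d) (x : Fin d) : Fin (d-1) := ⟨x.val - 1, by have := x.isLt; omega⟩

lemma up_injective : Function.Injective (up (d := d)) := by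
  intro a b h
  have := congrArg Fin.val h
  simp only [up] at this
  exact Fin.ext (by omega)

lemma up_ne_zero [NeZero d] (c : Fin (d-1)) : up c ≠ 0 := by
  intro h
  have := congrArg Fin.val h
  simp [up] at this

lemma up_down (hd : 2 ≤ d) [NeZero d] (x : Fin d) (hx : x ≠ 0) : up (down hd x) = x := by
  have hv : x.val ≠ 0 := fun h0 => hx (Fin.ext (by simp [h0]))
  exact Fin.ext (by simp [up, down]; omega)

/-- 2-constrained iff adjacent entries differ. -/
lemma constrained2_iff (x : Fin n → Fin d) :
    dbConstrained d 2 n x ↔ ∀ k (hk : k+1 < n), x ⟨k, Nat.lt_of_succ_lt hk⟩ ≠ x ⟨k+1, hk⟩ := by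
  constructor
  · intro h k hk heq
    have := h ⟨k, Nat.lt_of_succ_lt hk⟩ ⟨k+1, hk⟩ (by simp [Fin.lt_def]) heq
    simp [Fin.lt_def] at this
  · intro h i j hij heq
    by_contra hc
    push_neg at hc
    have hij' : (i : ℕ) < (j : ℕ) := hij
    have hj : (j : ℕ) = (i : ℕ) + 1 := by omega
    have h2 : (⟨(i:ℕ)+1, hj ▸ j.isLt⟩ : Fin n) = j := Fin.ext (by simp only [Fin.val_mk]; omega)
    exact h i.val (hj ▸ j.isLt) (by rw [Fin.eta, h2]; exact heq)

lemma adj_of_constrained {x : Fin n → Fin d} (hx : dbConstrained d 2 n x)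
    (k : ℕ) (hk : k+1 < n) : x ⟨k, Nat.lt_of_succ_lt hk⟩ ≠ x ⟨k+1, hk⟩ :=
  (constrained2_iff x).mp hx k hk

def bF [NeZero d] (f : Fin (n-1) → Fin (d-1)) (j : ℕ) : Fin d :=
  if h : j < n - 1 then up (f ⟨j, h⟩) else 0

def build [NeZero d] (a : Fin d) (f : Fin (n-1) → Fin (d-1)) : Fin n → Fin d :=
  fun i => a + ∑ k ∈ Finset.range i.val, bF f k

lemma build_zero [NeZero d] (a : Fin d) (f : Fin (n-1) → Fin (d-1)) (h0 : 0 < n) :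
    build a f ⟨0, h0⟩ = a := by simp [build]

lemma build_succ [NeZero d] (a : Fin d) (f : Fin (n-1) → Fin (d-1)) (k : ℕ) (hk : k+1 < n) :
    build a f ⟨k+1, hk⟩ = build a f ⟨k, Nat.lt_of_succ_lt hk⟩ + up (f ⟨k, by omega⟩) := by
  unfold build
  rw [show ((⟨k+1, hk⟩ : Fin n) : ℕ) = k + 1 from rfl, Finset.sum_range_succ, bF,
    dif_pos (show k < n-1 by omega), ← add_assoc]

lemma build_constrained [NeZero d] (a : Fin d) (f : Fin (n-1) → Fin (d-1)) :
    dbConstrained d 2 n (build a f) := by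
  rw [constrained2_iff]
  intro k hk heq
  rw [build_succ a f k hk] at heq
  exact up_ne_zero _ (by
    have := heq.symm
    rwa [add_eq_left] at this)

lemma build_inj_left [NeZero d] {a a' : Fin d} {f f' : Fin (n-1) → Fin (d-1)}
    (h : build a f = build a' f') (h0 : 0 < n) : a = a' := by
  have := congrFun h ⟨0, h0⟩
  rwa [build_zero, build_zero] at this

lemma build_inj_right [NeZero d] {a a' : Fin d} {f f' : Fin (n-1) → Fin (d-1)}
    (h : build a f = build a' f') : f = f' := by
  funext k
  have hk : k.val + 1 < n := by have := k.isLt; omega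
  have h1 := congrFun h ⟨k.val + 1, hk⟩
  rw [build_succ a f k.val hk, build_succ a' f' k.val hk, congrFun h ⟨k.val, _⟩] at h1
  have h2 := add_left_cancel h1
  have := up_injective h2
  simpa [Fin.eta] using this

end DBaux

namespace DBaux
variable {d n : ℕ}

lemma eq_of_prefix_diffs [NeZero d] (x x' : Fin n → Fin d) (t : ℕ) (ht : 1 ≤ t)
    (h0 : ∀ k (hk : k < n), k < t → x ⟨k, hk⟩ = x' ⟨k, hk⟩)
    (hdiff : ∀ k (hk : k+1 < n), t ≤ k+1 →
      x ⟨k+1, hk⟩ - x ⟨k, Nat.lt_of_succ_lt hk⟩ = x' ⟨k+1, hk⟩ - x' ⟨k, Nat.lt_of_succ_lt hk⟩) :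
    x = x' := by
  have H : ∀ k (hk : k < n), x ⟨k, hk⟩ = x' ⟨k, hk⟩ := by
    intro k
    induction k with
    | zero => intro hk; exact h0 0 hk (by omega)
    | succ m ih =>
      intro hk
      by_cases hlt : m + 1 < t
      · exact h0 _ _ hlt
      · have hdm := hdiff m hk (by omega)
        have hm := ih (Nat.lt_of_succ_lt hk)
        calc x ⟨m+1, hk⟩ = x ⟨m+1, hk⟩ - x ⟨m, _⟩ + x ⟨m, _⟩ := (sub_add_cancel _ _).symm
          _ = x' ⟨m+1, hk⟩ - x' ⟨m, _⟩ + x' ⟨m, _⟩ := by rw [hdm, hm]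
          _ = x' ⟨m+1, hk⟩ := sub_add_cancel _ _
  funext i
  have := H i.val i.isLt
  simpa [Fin.eta] using this

def cons (b : Fin d) (x : Fin n → Fin d) : Fin n → Fin d :=
  fun i => if h : i.val = 0 then b else x ⟨i.val - 1, by have := i.isLt; omega⟩

lemma cons_zero (b : Fin d) (x : Fin n → Fin d) (h0 : 0 < n) : cons b x ⟨0, h0⟩ = b := by
  simp [cons]

lemma cons_succ (b : Fin d) (x : Fin n → Fin d) (k : ℕ) (hk : k + 1 < n) :
    cons b x ⟨k+1, hk⟩ = x ⟨k, Nat.lt_of_succ_lt hk⟩ := by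
  simp [cons]

lemma cons_constrained (b : Fin d) (x : Fin n → Fin d) (hx : dbConstrained d 2 n x)
    (h0 : 0 < n) (hb : b ≠ x ⟨0, h0⟩) : dbConstrained d 2 n (cons b x) := by
  rw [constrained2_iff]
  intro k hk
  match k with
  | 0 => rw [cons_zero _ _ _, cons_succ _ _ 0 hk]; exact hb
  | (m+1) =>
    rw [cons_succ _ _ m _, cons_succ _ _ (m+1) hk]
    exact adj_of_constrained hx m (by omega)

def snoc (x : Fin n → Fin d) (e : Fin d) : Fin n → Fin d :=
  fun i => if h : i.val + 1 < n then x ⟨i.val + 1, h⟩ else e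

lemma snoc_lt (x : Fin n → Fin d) (e : Fin d) (k : ℕ) (hk : k + 1 < n) :
    snoc x e ⟨k, Nat.lt_of_succ_lt hk⟩ = x ⟨k+1, hk⟩ := by
  simp [snoc, hk]

lemma snoc_last (x : Fin n → Fin d) (e : Fin d) (h0 : 0 < n) :
    snoc x e ⟨n-1, by omega⟩ = e := by
  have : ¬ ((n-1) + 1 < n) := by omega
  simp [snoc, this]

lemma snoc_constrained (x : Fin n → Fin d) (e : Fin d) (hx : dbConstrained d 2 n x)
    (h0 : 0 < n) (he : e ≠ x ⟨n-1, by omega⟩) : dbConstrained d 2 n (snoc x e) := by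
  rw [constrained2_iff]
  intro k hk
  by_cases h2 : k + 1 + 1 < n
  · rw [snoc_lt x e k hk, snoc_lt x e (k+1) h2]
    exact adj_of_constrained hx (k+1) h2
  · have hk1 : k + 1 = n - 1 := by omega
    have : (⟨k+1, hk⟩ : Fin n) = ⟨n-1, by omega⟩ := Fin.ext (by simp only [Fin.val_mk]; omega)
    rw [this, snoc_last x e (by omega), snoc_lt x e k hk]
    intro heq
    apply he
    rw [← heq, this]

end DBaux

namespace DBaux
variable {d t n : ℕ}

lemma shift_cons (b : Fin d) (v s : dbVtx d t n) (hs : s.val = cons b v.val) :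
    dbShift s v := by
  intro i h
  rw [hs]
  exact ((cons_succ b v.val i.val h).trans (congrArg v.val (Fin.eta i i.isLt))).symm

lemma shift_snoc (e : Fin d) (v s : dbVtx d t n) (hs : s.val = snoc v.val e) :
    dbShift v s := by
  intro i h
  rw [hs]
  simp [snoc, h]

end DBaux

namespace DBaux

def L0 (d : ℕ) (hd : 2 ≤ d) : Fin d := ⟨0, by omega⟩
def L1 (d : ℕ) (hd : 2 ≤ d) : Fin d := ⟨1, by omega⟩

lemma L0_ne_L1 (d : ℕ) (hd : 2 ≤ d) : L0 d hd ≠ L1 d hd := by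
  intro h
  have := congrArg Fin.val h
  simp [L0, L1] at this

variable (d n : ℕ)

abbrev setW (hd : 2 ≤ d) (hn : 4 ≤ n) : Set (dbVtx d 2 n) :=
  {v | v.val ⟨0, by omega⟩ = L0 d hd}

abbrev setZ (hd : 2 ≤ d) (hn : 4 ≤ n) : Set (dbVtx d 2 n) :=
  {v | v.val ⟨0, by omega⟩ = L0 d hd ∧ v.val ⟨1, by omega⟩ = L1 d hd ∧
       v.val ⟨2, by omega⟩ = L0 d hd}

abbrev setA (hd : 2 ≤ d) (hn : 4 ≤ n) : Set (dbVtx d 2 n) :=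
  {v | v.val ⟨0, by omega⟩ = L1 d hd ∧ v.val ⟨1, by omega⟩ = L0 d hd ∧
       v.val ⟨2, by omega⟩ = L1 d hd ∧ v.val ⟨3, by omega⟩ = L0 d hd}

abbrev setS (hd : 2 ≤ d) (hn : 4 ≤ n) : Set (dbVtx d 2 n) :=
  (setW d n hd hn \ setZ d n hd hn) ∪ setA d n hd hn

set_option maxHeartbeats 1000000 in
lemma setS_dominating (hd : 2 ≤ d) (hn : 4 ≤ n) : dbUndirDominating (setS d n hd hn) := by
  intro v
  set x := v.val with hxdef
  by_cases h0 : x ⟨0, by omega⟩ = L0 d hd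
  · by_cases hz : x ⟨1, by omega⟩ = L1 d hd ∧ x ⟨2, by omega⟩ = L0 d hd
    · -- v ∈ Z : dominate by cons (L1)
      have hb : L1 d hd ≠ x ⟨0, by omega⟩ := by
        rw [h0]; exact (L0_ne_L1 d hd).symm
      refine ⟨⟨cons (L1 d hd) x, cons_constrained _ _ v.prop (by omega) hb⟩, ?_, ?_⟩
      · have hc0 : cons (L1 d hd) x ⟨0, by omega⟩ = L1 d hd := cons_zero _ _ (by omega)
        have hc1 : cons (L1 d hd) x ⟨0+1, by omega⟩ = L0 d hd :=
          (cons_succ _ _ 0 (by omega)).trans h0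
        have hc2 : cons (L1 d hd) x ⟨1+1, by omega⟩ = L1 d hd :=
          (cons_succ _ _ 1 (by omega)).trans hz.1
        have hc3 : cons (L1 d hd) x ⟨2+1, by omega⟩ = L0 d hd :=
          (cons_succ _ _ 2 (by omega)).trans hz.2
        exact Or.inr ⟨hc0, hc1, hc2, hc3⟩
      · refine Or.inr ⟨?_, Or.inl (shift_cons _ _ _ rfl)⟩
        intro heq
        have h00 := congrArg (fun w : dbVtx d 2 n => w.val ⟨0, by omega⟩) heq
        simp only at h00
        have hc0 : cons (L1 d hd) x ⟨0, by omega⟩ = L1 d hd := cons_zero _ _ (by omega)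
        rw [hc0, ← hxdef, h0] at h00
        exact (L0_ne_L1 d hd) h00.symm
    · -- v ∈ W ∖ Z : itself
      exact ⟨v, Or.inl ⟨h0, fun hm => hz ⟨hm.2.1, hm.2.2⟩⟩, Or.inl rfl⟩
  · by_cases h1 : x ⟨0, by omega⟩ = L1 d hd ∧ x ⟨1, by omega⟩ = L0 d hd
    · by_cases h2 : x ⟨2, by omega⟩ = L1 d hd ∧ x ⟨3, by omega⟩ = L0 d hd
      · exact ⟨v, Or.inr ⟨h1.1, h1.2, h2.1, h2.2⟩, Or.inl rfl⟩
      · -- dominate by snoc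
        have hex : ∃ e : Fin d, e ≠ x ⟨n-1, by omega⟩ := by
          by_cases hc : x ⟨n-1, by omega⟩ = L0 d hd
          · exact ⟨L1 d hd, by rw [hc]; exact (L0_ne_L1 d hd).symm⟩
          · exact ⟨L0 d hd, fun h => hc h.symm⟩
        obtain ⟨e, he⟩ := hex
        refine ⟨⟨snoc x e, snoc_constrained _ _ v.prop (by omega) he⟩, ?_, ?_⟩
        · have hs0 : snoc x e ⟨0, by omega⟩ = L0 d hd := (snoc_lt x e 0 (by omega)).trans h1.2
          refine Or.inl ⟨hs0, ?_⟩
          intro hm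
          have hs1 : snoc x e ⟨1, by omega⟩ = x ⟨1+1, by omega⟩ := snoc_lt x e 1 (by omega)
          have hs2 : snoc x e ⟨2, by omega⟩ = x ⟨2+1, by omega⟩ := snoc_lt x e 2 (by omega)
          exact h2 ⟨hs1.symm.trans hm.2.1, hs2.symm.trans hm.2.2⟩
        · refine Or.inr ⟨?_, Or.inr (shift_snoc _ _ _ rfl)⟩
          intro heq
          have h00 := congrArg (fun w : dbVtx d 2 n => w.val ⟨0, by omega⟩) heq
          simp only at h00
          have hs0 : snoc x e ⟨0, by omega⟩ = L0 d hd := (snoc_lt x e 0 (by omega)).trans h1.2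
          rw [hs0, ← hxdef, h1.1] at h00
          exact (L0_ne_L1 d hd) h00
    · -- dominate by cons L0
      have hb : L0 d hd ≠ x ⟨0, by omega⟩ := fun h => h0 h.symm
      refine ⟨⟨cons (L0 d hd) x, cons_constrained _ _ v.prop (by omega) hb⟩, ?_, ?_⟩
      · have hc0 : cons (L0 d hd) x ⟨0, by omega⟩ = L0 d hd := cons_zero _ _ (by omega)
        refine Or.inl ⟨hc0, ?_⟩
        intro hm
        have hc1 : cons (L0 d hd) x ⟨0+1, by omega⟩ = x ⟨0, by omega⟩ := cons_succ _ _ 0 (by omega)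
        have hc2 : cons (L0 d hd) x ⟨1+1, by omega⟩ = x ⟨1, by omega⟩ := cons_succ _ _ 1 (by omega)
        exact h1 ⟨hc1.symm.trans hm.2.1, hc2.symm.trans hm.2.2⟩
      · refine Or.inr ⟨?_, Or.inl (shift_cons _ _ _ rfl)⟩
        intro heq
        have h00 := congrArg (fun w : dbVtx d 2 n => w.val ⟨0, by omega⟩) heq
        simp only at h00
        have hc0 : cons (L0 d hd) x ⟨0, by omega⟩ = L0 d hd := cons_zero _ _ (by omega)
        rw [hc0, ← hxdef] at h00
        exact h0 h00.symm

end DBaux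

namespace DBaux
variable (d n : ℕ)

lemma down_inj (hd : 2 ≤ d) [NeZero d] {a b : Fin d} (ha : a ≠ 0) (hb : b ≠ 0)
    (h : down hd a = down hd b) : a = b := by
  have hva : a.val ≠ 0 := fun h0 => ha (Fin.ext (by simp [h0]))
  have hvb : b.val ≠ 0 := fun h0 => hb (Fin.ext (by simp [h0]))
  have := congrArg Fin.val h
  simp only [down] at this
  exact Fin.ext (by omega)

lemma ncard_setW_le (hd : 2 ≤ d) (hn : 4 ≤ n) :
    (setW d n hd hn).ncard ≤ (d-1)^(n-1) := by
  haveI : NeZero d := ⟨by omega⟩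
  set φ : setW d n hd hn → (Fin (n-1) → Fin (d-1)) := fun v k =>
    down hd (v.1.val ⟨k.val+1, by have := k.isLt; omega⟩ -
             v.1.val ⟨k.val, by have := k.isLt; omega⟩) with hφ
  have hinj : Function.Injective φ := by
    intro u w h
    apply Subtype.ext; apply Subtype.ext
    apply eq_of_prefix_diffs (t := 1) (ht := by omega)
    · intro k hk hk1
      have hk0 : k = 0 := by omega
      subst hk0
      exact u.2.trans w.2.symm
    · intro k hk hk1
      have hadju : u.1.val ⟨k+1, hk⟩ ≠ u.1.val ⟨k, Nat.lt_of_succ_lt hk⟩ :=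
        (adj_of_constrained u.1.prop k hk).symm
      have hadjw : w.1.val ⟨k+1, hk⟩ ≠ w.1.val ⟨k, Nat.lt_of_succ_lt hk⟩ :=
        (adj_of_constrained w.1.prop k hk).symm
      exact down_inj d hd (sub_ne_zero_of_ne hadju) (sub_ne_zero_of_ne hadjw)
        (congrFun h ⟨k, by omega⟩)
  calc (setW d n hd hn).ncard = Nat.card (setW d n hd hn) := (Nat.card_coe_set_eq _).symm
    _ ≤ Nat.card (Fin (n-1) → Fin (d-1)) := Nat.card_le_card_of_injective φ hinj
    _ = (d-1)^(n-1) := by simp [Nat.card_eq_fintype_card, Fintype.card_fun]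

lemma ncard_setA_le (hd : 2 ≤ d) (hn : 4 ≤ n) :
    (setA d n hd hn).ncard ≤ (d-1)^(n-4) := by
  haveI : NeZero d := ⟨by omega⟩
  set φ : setA d n hd hn → (Fin (n-4) → Fin (d-1)) := fun v k =>
    down hd (v.1.val ⟨k.val+4, by have := k.isLt; omega⟩ -
             v.1.val ⟨k.val+3, by have := k.isLt; omega⟩) with hφ
  have hinj : Function.Injective φ := by
    intro u w h
    apply Subtype.ext; apply Subtype.ext
    apply eq_of_prefix_diffs (t := 4) (ht := by omega)
    · intro k hk hk4
      interval_cases k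
      · exact u.2.1.trans w.2.1.symm
      · exact u.2.2.1.trans w.2.2.1.symm
      · exact u.2.2.2.1.trans w.2.2.2.1.symm
      · exact u.2.2.2.2.trans w.2.2.2.2.symm
    · intro k hk hk4
      have hadju : u.1.val ⟨k+1, hk⟩ ≠ u.1.val ⟨k, Nat.lt_of_succ_lt hk⟩ :=
        (adj_of_constrained u.1.prop k hk).symm
      have hadjw : w.1.val ⟨k+1, hk⟩ ≠ w.1.val ⟨k, Nat.lt_of_succ_lt hk⟩ :=
        (adj_of_constrained w.1.prop k hk).symm
      have hc := congrFun h ⟨k-3, by omega⟩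
      simp only [hφ, show k-3+4 = k+1 from by omega, show k-3+3 = k from by omega] at hc
      exact down_inj d hd (sub_ne_zero_of_ne hadju) (sub_ne_zero_of_ne hadjw) hc
  calc (setA d n hd hn).ncard = Nat.card (setA d n hd hn) := (Nat.card_coe_set_eq _).symm
    _ ≤ Nat.card (Fin (n-4) → Fin (d-1)) := Nat.card_le_card_of_injective φ hinj
    _ = (d-1)^(n-4) := by simp [Nat.card_eq_fintype_card, Fintype.card_fun]

end DBaux

namespace DBaux
variable (d n : ℕ)

def fz (hd : 2 ≤ d) (hn : 4 ≤ n) (g : Fin (n-3) → Fin (d-1)) : Fin (n-1) → Fin (d-1) :=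
  fun k => if k.val = 0 then ⟨0, by omega⟩ else if k.val = 1 then ⟨d-2, by omega⟩
           else g ⟨k.val - 2, by have := k.isLt; omega⟩

lemma ncard_setZ_ge (hd : 2 ≤ d) (hn : 4 ≤ n) :
    (d-1)^(n-3) ≤ (setZ d n hd hn).ncard := by
  haveI : NeZero d := ⟨by omega⟩
  have hmem : ∀ g : Fin (n-3) → Fin (d-1),
      (⟨build 0 (fz d n hd hn g), build_constrained _ _⟩ : dbVtx d 2 n) ∈ setZ d n hd hn := by
    intro g
    have b0 : build (0 : Fin d) (fz d n hd hn g) ⟨0, by omega⟩ = L0 d hd := by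
      rw [build_zero]; exact Fin.ext (by simp [L0])
    have b1 : build (0 : Fin d) (fz d n hd hn g) ⟨0+1, by omega⟩ = L1 d hd := by
      rw [build_succ _ _ 0 (by omega), b0]
      have hfz : fz d n hd hn g ⟨0, by omega⟩ = ⟨0, by omega⟩ := by simp [fz]
      rw [hfz]
      apply Fin.ext
      rw [Fin.val_add]
      show ((0:ℕ) + (0 + 1)) % d = 1
      rw [Nat.mod_eq_of_lt (by omega)]
    have b2 : build (0 : Fin d) (fz d n hd hn g) ⟨1+1, by omega⟩ = L0 d hd := by
      rw [build_succ _ _ 1 (by omega), b1]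
      have hfz : fz d n hd hn g ⟨1, by omega⟩ = ⟨d-2, by omega⟩ := by simp [fz]
      rw [hfz]
      apply Fin.ext
      rw [Fin.val_add]
      show ((1:ℕ) + (d-2+1)) % d = 0
      have h2 : 1 + (d-2+1) = d := by omega
      rw [h2, Nat.mod_self]
    exact ⟨b0, b1, b2⟩
  set ψ : (Fin (n-3) → Fin (d-1)) → setZ d n hd hn := fun g =>
    ⟨⟨build 0 (fz d n hd hn g), build_constrained _ _⟩, hmem g⟩ with hψ
  have hinj : Function.Injective ψ := by
    intro g g' h
    have h1 : build (0:Fin d) (fz d n hd hn g) = build 0 (fz d n hd hn g') :=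
      congrArg (fun z => z.1.val) h
    have h2 := build_inj_right h1
    funext k
    have h3 := congrFun h2 ⟨k.val + 2, by have := k.isLt; omega⟩
    simp only [fz] at h3
    norm_num at h3
    simpa [Fin.eta] using h3
  calc (d-1)^(n-3) = Nat.card (Fin (n-3) → Fin (d-1)) := by
        simp [Nat.card_eq_fintype_card, Fintype.card_fun]
    _ ≤ Nat.card (setZ d n hd hn) := Nat.card_le_card_of_injective ψ hinj
    _ = (setZ d n hd hn).ncard := Nat.card_coe_set_eq _

lemma card_V_ge (hd : 2 ≤ d) (hn : 4 ≤ n) :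
    d * (d-1)^(n-1) ≤ Fintype.card (dbVtx d 2 n) := by
  haveI : NeZero d := ⟨by omega⟩
  set ι : (Fin d × (Fin (n-1) → Fin (d-1))) → dbVtx d 2 n := fun p =>
    ⟨build p.1 p.2, build_constrained _ _⟩ with hι
  have hinj : Function.Injective ι := by
    intro p q h
    have h1 : build p.1 p.2 = build q.1 q.2 := congrArg (fun z => z.val) h
    exact Prod.ext (build_inj_left h1 (by omega)) (build_inj_right h1)
  calc d * (d-1)^(n-1) = Fintype.card (Fin d × (Fin (n-1) → Fin (d-1))) := by
        simp [Fintype.card_fun]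
    _ ≤ Fintype.card (dbVtx d 2 n) := Fintype.card_le_of_injective ι hinj

end DBaux

namespace DBaux
variable (d n : ℕ)

instance {d t n : ℕ} (x y : dbVtx d t n) : Decidable (dbAdj x y) := by
  unfold dbAdj; infer_instance

set_option maxHeartbeats 1000000 in
lemma dominated_card_le (hd : 2 ≤ d) (hn : 4 ≤ n) (s : dbVtx d 2 n)
    (T : Finset (dbVtx d 2 n)) (hT : ∀ v ∈ T, s = v ∨ dbAdj s v) :
    T.card ≤ 2*d - 1 := by
  classical
  set Os : Finset (dbVtx d 2 n) := Finset.univ.filter (fun v => dbShift s v) with hOs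
  set Is : Finset (dbVtx d 2 n) := Finset.univ.filter (fun v => dbShift v s) with hIs
  have hsub : T ⊆ ({s} ∪ Os) ∪ Is := by
    intro v hv
    rcases hT v hv with heq | hadj
    · exact Finset.mem_union_left _ (Finset.mem_union_left _ (by simp [heq.symm]))
    · rcases hadj.2 with hsh | hsh
      · exact Finset.mem_union_left _ (Finset.mem_union_right _ (by simp [hOs, hsh]))
      · exact Finset.mem_union_right _ (by simp [hIs, hsh])
  have hOcard : Os.card ≤ d - 1 := by
    have hmaps : ∀ v ∈ Os, v.val ⟨n-1, by omega⟩ ∈ Finset.univ.erase (s.val ⟨n-1, by omega⟩) := by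
      intro v hv
      rw [hOs, Finset.mem_filter] at hv
      have hsh := hv.2
      refine Finset.mem_erase.mpr ⟨?_, Finset.mem_univ _⟩
      intro hlast
      have hidx : (⟨n-2+1, by omega⟩ : Fin n) = ⟨n-1, by omega⟩ := Fin.ext (by simp; omega)
      have h1 : v.val ⟨n-2, by omega⟩ = s.val ⟨n-2+1, by omega⟩ := hsh ⟨n-2, by omega⟩ (by simp; omega)
      have hadj := adj_of_constrained v.prop (n-2) (by omega)
      exact hadj (h1.trans ((congrArg s.val hidx).trans
        (hlast.symm.trans (congrArg v.val hidx).symm)))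
    have hinj2 : Set.InjOn (fun v : dbVtx d 2 n => v.val ⟨n-1, by omega⟩) Os := by
      intro v hv w hw hvw
      rw [hOs, Finset.mem_coe, Finset.mem_filter] at hv hw
      apply Subtype.ext; funext i
      by_cases hi : i.val + 1 < n
      · exact (hv.2 i hi).trans (hw.2 i hi).symm
      · have hieq : i = ⟨n-1, by omega⟩ := Fin.ext (by have := i.isLt; simp; omega)
        exact (congrArg v.val hieq).trans (hvw.trans (congrArg w.val hieq).symm)
    have h2 := Finset.card_le_card_of_injOn (s := Os)
      (t := Finset.univ.erase (s.val ⟨n-1, by omega⟩))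
      (fun v : dbVtx d 2 n => v.val ⟨n-1, by omega⟩) hmaps hinj2
    simpa [Finset.card_erase_of_mem] using h2
  have hIcard : Is.card ≤ d - 1 := by
    have hmaps : ∀ v ∈ Is, v.val ⟨0, by omega⟩ ∈ Finset.univ.erase (s.val ⟨0, by omega⟩) := by
      intro v hv
      rw [hIs, Finset.mem_filter] at hv
      have hsh := hv.2
      refine Finset.mem_erase.mpr ⟨?_, Finset.mem_univ _⟩
      intro hfirst
      have h1 : s.val ⟨0, by omega⟩ = v.val ⟨0+1, by omega⟩ := hsh ⟨0, by omega⟩ (by simp; omega)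
      have hadj := adj_of_constrained v.prop 0 (by omega)
      exact hadj (hfirst.trans h1)
    have hinj2 : Set.InjOn (fun v : dbVtx d 2 n => v.val ⟨0, by omega⟩) Is := by
      intro v hv w hw hvw
      rw [hIs, Finset.mem_coe, Finset.mem_filter] at hv hw
      apply Subtype.ext; funext i
      by_cases hi : i.val = 0
      · have hieq : i = ⟨0, by omega⟩ := Fin.ext (by simp; omega)
        exact (congrArg v.val hieq).trans (hvw.trans (congrArg w.val hieq).symm)
      · have hj : (i.val - 1) + 1 < n := by have := i.isLt; omega
        have hidx : (⟨(i.val-1)+1, hj⟩ : Fin n) = i := Fin.ext (by simp; omega)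
        have h1 := hv.2 ⟨i.val - 1, by omega⟩ hj
        have h2 := hw.2 ⟨i.val - 1, by omega⟩ hj
        exact (congrArg v.val hidx).symm.trans (h1.symm.trans (h2.trans (congrArg w.val hidx)))
    have h2 := Finset.card_le_card_of_injOn (s := Is)
      (t := Finset.univ.erase (s.val ⟨0, by omega⟩))
      (fun v : dbVtx d 2 n => v.val ⟨0, by omega⟩) hmaps hinj2
    simpa [Finset.card_erase_of_mem] using h2
  calc T.card ≤ (({s} ∪ Os) ∪ Is).card := Finset.card_le_card hsub
    _ ≤ ({s} ∪ Os).card + Is.card := Finset.card_union_le _ _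
    _ ≤ (({s} : Finset _).card + Os.card) + Is.card :=
        Nat.add_le_add_right (Finset.card_union_le _ _) _
    _ ≤ (1 + (d-1)) + (d-1) := by
        have h1 : ({s} : Finset (dbVtx d 2 n)).card = 1 := Finset.card_singleton s
        omega
    _ ≤ 2*d - 1 := by omega

set_option maxHeartbeats 1000000 in
lemma card_le_of_dominating (hd : 2 ≤ d) (hn : 4 ≤ n) (S : Set (dbVtx d 2 n))
    (hdom : dbUndirDominating S) :
    Fintype.card (dbVtx d 2 n) ≤ (2*d - 1) * S.ncard := by
  classical
  choose F hmem hspec using hdom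
  have hfib : ∀ a ∈ Finset.univ.image F,
      (Finset.univ.filter (fun v => F v = a)).card ≤ 2*d - 1 := by
    intro a _
    refine dominated_card_le d n hd hn a _ ?_
    intro v hv
    rw [Finset.mem_filter] at hv
    have := hspec v
    rw [hv.2] at this
    exact this
  calc Fintype.card (dbVtx d 2 n) = Finset.univ.card := rfl
    _ ≤ (2*d-1) * (Finset.univ.image F).card := Finset.card_le_mul_card_image _ _ hfib
    _ ≤ (2*d-1) * S.ncard := by
        apply Nat.mul_le_mul_left
        rw [Set.ncard_eq_toFinset_card']
        apply Finset.card_le_card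
        intro a ha
        rw [Finset.mem_image] at ha
        obtain ⟨v, _, rfl⟩ := ha
        simpa using hmem v

end DBaux

namespace DBaux

lemma gamma_eq (d t n : ℕ) : gammaUndir d t n =
    sInf {k | ∃ S : Set (dbVtx d t n), S.Finite ∧ S.ncard = k ∧ dbUndirDominating S} := rfl

lemma gamma_facts (d n : ℕ) (hd : 2 ≤ d) (hn : 4 ≤ n) :
    ∃ S : Set (dbVtx d 2 n), S.Finite ∧ S.ncard = gammaUndir d 2 n ∧ dbUndirDominating S := by
  have hne : {k | ∃ S : Set (dbVtx d 2 n), S.Finite ∧ S.ncard = k ∧ dbUndirDominating S}.Nonempty :=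
    ⟨(Set.univ : Set (dbVtx d 2 n)).ncard, Set.univ, Set.toFinite _, rfl,
      fun v => ⟨v, trivial, Or.inl rfl⟩⟩
  have hmem := Nat.sInf_mem hne
  rw [← gamma_eq] at hmem
  exact hmem

lemma gamma_le (d n : ℕ) (hd : 2 ≤ d) (hn : 4 ≤ n) :
    gammaUndir d 2 n ≤ (setS d n hd hn).ncard := by
  rw [gamma_eq]
  exact Nat.sInf_le ⟨setS d n hd hn, Set.toFinite _, rfl, setS_dominating d n hd hn⟩

lemma nat_lower (d n : ℕ) (hd : 2 ≤ d) (hn : 4 ≤ n) :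
    d * (d-1)^(n-1) ≤ (2*d-1) * gammaUndir d 2 n := by
  obtain ⟨S₀, hfin₀, hcard₀, hdom₀⟩ := gamma_facts d n hd hn
  have h1 := card_V_ge d n hd hn
  have h2 := card_le_of_dominating d n hd hn S₀ hdom₀
  rw [hcard₀] at h2
  exact le_trans h1 h2

lemma nat_upper (d n : ℕ) (hd : 2 ≤ d) (hn : 4 ≤ n) :
    gammaUndir d 2 n + (d-2)*(d-1)^(n-4) ≤ (d-1)^(n-1) := by
  have hW := ncard_setW_le d n hd hn
  have hZ := ncard_setZ_ge d n hd hn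
  have hA := ncard_setA_le d n hd hn
  have hZW : setZ d n hd hn ⊆ setW d n hd hn := fun v hv => hv.1
  have hZleW : (setZ d n hd hn).ncard ≤ (setW d n hd hn).ncard :=
    Set.ncard_le_ncard hZW (Set.toFinite _)
  have hdiffcard : (setW d n hd hn \ setZ d n hd hn).ncard
      = (setW d n hd hn).ncard - (setZ d n hd hn).ncard := Set.ncard_diff hZW (Set.toFinite _)
  have hun : (setS d n hd hn).ncard
      ≤ (setW d n hd hn \ setZ d n hd hn).ncard + (setA d n hd hn).ncard :=
    Set.ncard_union_le _ _
  rw [hdiffcard] at hun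
  set p : ℕ := (d-1)^(n-4) with hp
  have hp3 : (d-1)^(n-3) = p * (d-1) := by
    rw [hp, ← pow_succ]
    congr 1
    omega
  rw [hp3] at hZ
  have hd2 : (d-2)*p + p = p*(d-1) := by
    have h : d-2+1 = d-1 := by omega
    calc (d-2)*p + p = (d-2+1)*p := by ring
      _ = (d-1)*p := by rw [h]
      _ = p*(d-1) := mul_comm _ _
  have hSle := gamma_le d n hd hn
  calc gammaUndir d 2 n + (d-2)*p
      ≤ (((setW d n hd hn).ncard - (setZ d n hd hn).ncard) + (setA d n hd hn).ncard) + (d-2)*p :=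
        Nat.add_le_add_right (le_trans hSle hun) _
    _ ≤ (((setW d n hd hn).ncard - (setZ d n hd hn).ncard) + p) + (d-2)*p :=
        Nat.add_le_add_right (Nat.add_le_add_left hA _) _
    _ = ((setW d n hd hn).ncard - (setZ d n hd hn).ncard) + ((d-2)*p + p) := by
        rw [add_assoc, Nat.add_comm p ((d-2)*p)]
    _ = ((setW d n hd hn).ncard - (setZ d n hd hn).ncard) + p*(d-1) := by rw [hd2]
    _ ≤ ((setW d n hd hn).ncard - (setZ d n hd hn).ncard) + (setZ d n hd hn).ncard :=
        Nat.add_le_add_left hZ _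
    _ = (setW d n hd hn).ncard := by omega
    _ ≤ (d-1)^(n-1) := hW

end DBaux


/-- `d(d-1)^(n-1)/(2d-1) ≤ γ(cDB(d,2,n)) ≤ (d-1)^(n-1) - (d-2)(d-1)^(n-4)`
for `n ≥ 4`. -/
theorem gammaUndir_kautz_bounds (d n : ℕ) (hd : 2 ≤ d) (hn : 4 ≤ n) :
    (d : ℚ) * ((d : ℚ) - 1) ^ (n - 1) / (2 * (d : ℚ) - 1) ≤ (gammaUndir d 2 n : ℚ) ∧
    (gammaUndir d 2 n : ℚ) ≤
      ((d : ℚ) - 1) ^ (n - 1) - ((d : ℚ) - 2) * ((d : ℚ) - 1) ^ (n - 4) := by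
  have hdQ : (2:ℚ) ≤ (d:ℚ) := by exact_mod_cast hd
  constructor
  · rw [div_le_iff₀ (by linarith)]
    have h := DBaux.nat_lower d n hd hn
    qify [show (1:ℕ) ≤ d by omega, show (1:ℕ) ≤ 2*d by omega] at h
    push_cast at h
    linarith
  · have h := DBaux.nat_upper d n hd hn
    qify [show (1:ℕ) ≤ d by omega, show (2:ℕ) ≤ d by omega] at h
    push_cast at h
    linarith
end
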